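/- arXiv:2311.13219 — 4 statements merged into one kernel-verified Lean document; each statement's English description precedes it below -/
import Mathlib

section
/- Let X, W be independent standard normal random variables, θ ∈ [0, π/2], ρ = cos θ, and Y = X cos θ + W sin θ. Then E[|XY|] = (2/π)[√(1−ρ²) + ρ·arcsin(ρ)]. -/
open MeasureTheory ProbabilityTheory Real

open scoped ENNReal NNReal


lemma radial_aux : ∫ r in Set.Ioi (0:ℝ), r ^ 3 * rexp (-(r ^ 2) / 2) = 2 := by
  have hint : IntegrableOn (fun r : ℝ => r ^ 3 * rexp (-(r ^ 2) / 2)) (Set.Ioi 0) := by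
    have := integrableOn_rpow_mul_exp_neg_mul_sq (b := 1/2) (by norm_num) (s := 3) (by norm_num)
    refine this.congr_fun (fun x _ => ?_) measurableSet_Ioi
    dsimp only
    rw [show -(1/2:ℝ) * x^2 = -x^2/2 by ring]
    norm_cast
  have hderiv : ∀ r ∈ Set.Ici (0:ℝ),
      HasDerivAt (fun r : ℝ => -(r ^ 2 + 2) * rexp (-(r ^ 2) / 2)) (r ^ 3 * rexp (-(r ^ 2) / 2)) r := by
    intro r _
    have h1 : HasDerivAt (fun r : ℝ => -(r ^ 2 + 2)) (-(2 * r)) r := by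
      simpa using ((hasDerivAt_pow 2 r).add_const 2).fun_neg
    have h2 : HasDerivAt (fun r : ℝ => rexp (-(r ^ 2) / 2)) (-r * rexp (-(r ^ 2) / 2)) r := by
      have h3 : HasDerivAt (fun r : ℝ => -(r ^ 2) / 2) (-r) r := by
        have := (hasDerivAt_pow 2 r).fun_neg.div_const 2
        refine this.congr_deriv ?_
        ring
      simpa [mul_comm] using h3.exp
    have := h1.mul h2
    refine this.congr_deriv ?_
    ring
  have htend : Filter.Tendsto (fun r : ℝ => -(r ^ 2 + 2) * rexp (-(r ^ 2) / 2)) Filter.atTop (nhds 0) := by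
    have hu : Filter.Tendsto (fun r : ℝ => r ^ 2 / 2) Filter.atTop Filter.atTop := by
      exact (Filter.tendsto_pow_atTop (by norm_num)).atTop_div_const (by norm_num)
    have hbase : Filter.Tendsto (fun y : ℝ => -(2 * y + 2) * rexp (-y)) Filter.atTop (nhds 0) := by
      have t1 : Filter.Tendsto (fun y : ℝ => y * rexp (-y)) Filter.atTop (nhds 0) := by
        simpa using Real.tendsto_pow_mul_exp_neg_atTop_nhds_zero 1
      have t2 : Filter.Tendsto (fun y : ℝ => rexp (-y)) Filter.atTop (nhds 0) :=
        Real.tendsto_exp_neg_atTop_nhds_zero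
      have := ((t1.const_mul 2).add (t2.const_mul 2)).neg
      simp only [mul_zero, add_zero, neg_zero] at this
      refine this.congr fun y => ?_
      ring
    have := hbase.comp hu
    refine this.congr fun r => ?_
    simp only [Function.comp]
    rw [show -(r^2:ℝ)/2 = -(r^2/2) by ring]
    ring_nf
  have := integral_Ioi_of_hasDerivAt_of_tendsto' (f' := fun r : ℝ => r ^ 3 * rexp (-(r ^ 2) / 2))
    hderiv hint htend
  rw [this]
  norm_num


noncomputable def Fprim (θ φ : ℝ) : ℝ := (φ * Real.cos θ + Real.sin (2 * φ - θ) / 2) / 2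

lemma Fprim_hasDeriv (θ x : ℝ) : HasDerivAt (Fprim θ) (Real.cos x * Real.cos (x - θ)) x := by
  have h1 : HasDerivAt (fun φ : ℝ => φ * Real.cos θ) (Real.cos θ) x := by
    simpa using (hasDerivAt_id x).mul_const (Real.cos θ)
  have h2 : HasDerivAt (fun φ : ℝ => 2 * φ - θ) 2 x := by
    simpa using ((hasDerivAt_id x).const_mul 2).sub_const θ
  have h3 : HasDerivAt (fun φ : ℝ => Real.sin (2 * φ - θ)) (Real.cos (2 * x - θ) * 2) x :=
    by have := (Real.hasDerivAt_sin (2 * x - θ)).comp x h2; exact this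
  have h4 := ((h1.add (h3.div_const 2)).div_const 2)
  refine h4.congr_deriv ?_
  have hA := Real.cos_sub x (x - θ)
  have hB := Real.cos_add x (x - θ)
  rw [show x - (x - θ) = θ by ring] at hA
  rw [show x + (x - θ) = 2 * x - θ by ring] at hB
  rw [hA, hB]
  ring

lemma piece (θ a b : ℝ) :
    ∫ φ in a..b, Real.cos φ * Real.cos (φ - θ) = Fprim θ b - Fprim θ a := by
  refine intervalIntegral.integral_eq_sub_of_hasDerivAt (fun x _ => Fprim_hasDeriv θ x) ?_
  exact (Continuous.mul (Real.continuous_cos) (Real.continuous_cos.comp (by continuity))).intervalIntegrable a b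

lemma angular {θ : ℝ} (h0 : 0 ≤ θ) (h1 : θ ≤ π / 2) :
    ∫ φ in (-π)..π, |Real.cos φ * Real.cos (φ - θ)| =
      2 * Real.sin θ + (π - 2 * θ) * Real.cos θ := by
  have hπ := Real.pi_pos
  have hc : Continuous fun φ : ℝ => |Real.cos φ * Real.cos (φ - θ)| := by
    exact (Real.continuous_cos.mul (Real.continuous_cos.comp (by continuity))).abs
  have hii : ∀ a b : ℝ, IntervalIntegrable (fun φ => |Real.cos φ * Real.cos (φ - θ)|) volume a b :=
    fun a b => hc.intervalIntegrable a b
  -- splitting points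
  have l1 : (-π) ≤ -(π/2) := by linarith
  have l2 : -(π/2) ≤ θ - π/2 := by linarith
  have l3 : θ - π/2 ≤ π/2 := by linarith
  have l4 : (π/2) ≤ θ + π/2 := by linarith
  have l5 : θ + π/2 ≤ π := by linarith
  rw [← intervalIntegral.integral_add_adjacent_intervals (a := -π) (b := -(π/2)) (c := π)
        (hii _ _) (hii _ _),
      ← intervalIntegral.integral_add_adjacent_intervals (a := -(π/2)) (b := θ - π/2) (c := π)
        (hii _ _) (hii _ _),
      ← intervalIntegral.integral_add_adjacent_intervals (a := θ - π/2) (b := π/2) (c := π)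
        (hii _ _) (hii _ _),
      ← intervalIntegral.integral_add_adjacent_intervals (a := π/2) (b := θ + π/2) (c := π)
        (hii _ _) (hii _ _)]
  have e1 : ∫ φ in (-π)..(-(π/2)), |Real.cos φ * Real.cos (φ - θ)| =
      Fprim θ (-(π/2)) - Fprim θ (-π) := by
    rw [← piece θ]
    refine intervalIntegral.integral_congr fun x hx => ?_
    rw [Set.uIcc_of_le l1] at hx
    refine abs_of_nonneg (mul_nonneg_iff.mpr (Or.inr ⟨?_, ?_⟩))
    · rw [← Real.cos_neg]
      exact Real.cos_nonpos_of_pi_div_two_le_of_le (by linarith [hx.2]) (by linarith [hx.1])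
    · rw [← Real.cos_neg]
      exact Real.cos_nonpos_of_pi_div_two_le_of_le (by linarith [hx.2]) (by linarith [hx.1])
  have e2 : ∫ φ in (-(π/2))..(θ - π/2), |Real.cos φ * Real.cos (φ - θ)| =
      -(Fprim θ (θ - π/2) - Fprim θ (-(π/2))) := by
    rw [← piece θ, ← intervalIntegral.integral_neg]
    refine intervalIntegral.integral_congr fun x hx => ?_
    rw [Set.uIcc_of_le l2] at hx
    rw [abs_of_nonpos]
    exact mul_nonpos_iff.mpr (Or.inl ⟨Real.cos_nonneg_of_mem_Icc ⟨hx.1, by linarith [hx.2]⟩, by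
      rw [← Real.cos_neg]
      exact Real.cos_nonpos_of_pi_div_two_le_of_le (by linarith [hx.2]) (by linarith [hx.1])⟩)
  have e3 : ∫ φ in (θ - π/2)..(π/2), |Real.cos φ * Real.cos (φ - θ)| =
      Fprim θ (π/2) - Fprim θ (θ - π/2) := by
    rw [← piece θ]
    refine intervalIntegral.integral_congr fun x hx => ?_
    rw [Set.uIcc_of_le l3] at hx
    refine abs_of_nonneg (mul_nonneg ?_ ?_)
    · exact Real.cos_nonneg_of_mem_Icc ⟨by linarith [hx.1], hx.2⟩
    · exact Real.cos_nonneg_of_mem_Icc ⟨by linarith [hx.1], by linarith [hx.2]⟩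
  have e4 : ∫ φ in (π/2)..(θ + π/2), |Real.cos φ * Real.cos (φ - θ)| =
      -(Fprim θ (θ + π/2) - Fprim θ (π/2)) := by
    rw [← piece θ, ← intervalIntegral.integral_neg]
    refine intervalIntegral.integral_congr fun x hx => ?_
    rw [Set.uIcc_of_le l4] at hx
    rw [abs_of_nonpos]
    exact mul_nonpos_iff.mpr (Or.inr ⟨Real.cos_nonpos_of_pi_div_two_le_of_le hx.1 (by linarith [hx.2]),
      Real.cos_nonneg_of_mem_Icc ⟨by linarith [hx.1], by linarith [hx.2]⟩⟩)
  have e5 : ∫ φ in (θ + π/2)..π, |Real.cos φ * Real.cos (φ - θ)| =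
      Fprim θ π - Fprim θ (θ + π/2) := by
    rw [← piece θ]
    refine intervalIntegral.integral_congr fun x hx => ?_
    rw [Set.uIcc_of_le l5] at hx
    refine abs_of_nonneg (mul_nonneg_iff.mpr (Or.inr ⟨?_, ?_⟩))
    · exact Real.cos_nonpos_of_pi_div_two_le_of_le (by linarith [hx.1]) (by linarith [hx.2])
    · exact Real.cos_nonpos_of_pi_div_two_le_of_le (by linarith [hx.1]) (by linarith [hx.2])
  rw [e1, e2, e3, e4, e5]
  simp only [Fprim]
  rw [show 2 * -(π/2) - θ = -(π + θ) by ring, show 2 * (θ - π/2) - θ = θ - π by ring,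
      show 2 * (π/2) - θ = π - θ by ring, show 2 * (θ + π/2) - θ = θ + π by ring,
      show 2 * -π - θ = -(2*π + θ) by ring, show 2 * π - θ = 2*π - θ by ring]
  simp [Real.sin_add, Real.sin_sub, Real.sin_pi, Real.cos_pi, Real.sin_two_pi, Real.cos_two_pi,
    Real.sin_neg, Real.cos_neg]
  ring

lemma wd_prod {f g : ℝ → ℝ≥0∞} (hf : Measurable f) (hg : Measurable g)
    (hftop : ∀ x, f x ≠ ⊤) (hgtop : ∀ x, g x ≠ ⊤) :
    (volume.withDensity f).prod (volume.withDensity g)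
      = (volume : Measure (ℝ × ℝ)).withDensity (fun p => f p.1 * g p.2) := by
  haveI : SigmaFinite (volume.withDensity f) :=
    SigmaFinite.withDensity_of_ne_top' hftop
  haveI : SigmaFinite (volume.withDensity g) :=
    SigmaFinite.withDensity_of_ne_top' hgtop
  refine Measure.prod_eq fun s t hs ht => ?_
  rw [withDensity_apply _ (hs.prod ht), withDensity_apply _ hs, withDensity_apply _ ht,
    Measure.volume_eq_prod, ← Measure.prod_restrict,
    lintegral_prod_mul hf.aemeasurable hg.aemeasurable]


set_option maxHeartbeats 1000000 in
lemma gauss_prod_integral (θ : ℝ) (hθ0 : 0 ≤ θ) (hθ1 : θ ≤ π/2) :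
    ∫ p : ℝ × ℝ, |p.1 * (p.1 * Real.cos θ + p.2 * Real.sin θ)|
        ∂((gaussianReal 0 1).prod (gaussianReal 0 1))
      = (2 / π) * (Real.sin θ + Real.cos θ * (π / 2 - θ)) := by
  have hπ := Real.pi_pos
  rw [gaussianReal_of_var_ne_zero 0 one_ne_zero,
    wd_prod (measurable_gaussianPDF 0 1) (measurable_gaussianPDF 0 1)
      (fun x => ENNReal.ofReal_ne_top) (fun x => ENNReal.ofReal_ne_top)]
  have hDen : (fun p : ℝ × ℝ => gaussianPDF 0 1 p.1 * gaussianPDF 0 1 p.2)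
      = fun p : ℝ × ℝ =>
        (((gaussianPDFReal 0 1 p.1).toNNReal * (gaussianPDFReal 0 1 p.2).toNNReal : ℝ≥0) : ℝ≥0∞) := by
    funext p
    simp [gaussianPDF, ENNReal.ofReal, ENNReal.coe_mul]
  have hDm : Measurable fun p : ℝ × ℝ =>
      ((gaussianPDFReal 0 1 p.1).toNNReal * (gaussianPDFReal 0 1 p.2).toNNReal : ℝ≥0) :=
    (measurable_real_toNNReal.comp ((measurable_gaussianPDFReal 0 1).comp measurable_fst)).mul
      (measurable_real_toNNReal.comp ((measurable_gaussianPDFReal 0 1).comp measurable_snd))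
  rw [hDen, integral_withDensity_eq_integral_smul hDm]
  rw [← integral_comp_polarCoord_symm]
  have hEq : Set.EqOn
      (fun p : ℝ × ℝ => p.1 • (((gaussianPDFReal 0 1 (polarCoord.symm p).1).toNNReal *
          (gaussianPDFReal 0 1 (polarCoord.symm p).2).toNNReal : ℝ≥0) •
        |(polarCoord.symm p).1 * ((polarCoord.symm p).1 * Real.cos θ + (polarCoord.symm p).2 * Real.sin θ)|))
      (fun p : ℝ × ℝ => (p.1 ^ 3 * rexp (-(p.1 ^ 2) / 2)) *
        ((2 * π)⁻¹ * |Real.cos p.2 * Real.cos (p.2 - θ)|))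
      polarCoord.target := by
    rintro ⟨r, φ⟩ hp
    rw [polarCoord_target] at hp
    obtain ⟨hr, hφ⟩ := hp
    simp only [polarCoord_symm_apply, smul_eq_mul, NNReal.smul_def, NNReal.coe_mul]
    rw [Real.coe_toNNReal _ (gaussianPDFReal_nonneg _ _ _),
        Real.coe_toNNReal _ (gaussianPDFReal_nonneg _ _ _)]
    simp only [gaussianPDFReal]
    have hr0 : (0:ℝ) < r := hr
    have habs : |r * Real.cos φ * (r * Real.cos φ * Real.cos θ + r * Real.sin φ * Real.sin θ)|
        = r ^ 2 * |Real.cos φ * Real.cos (φ - θ)| := by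
      rw [Real.cos_sub]
      rw [show r * Real.cos φ * (r * Real.cos φ * Real.cos θ + r * Real.sin φ * Real.sin θ)
          = r ^ 2 * (Real.cos φ * (Real.cos φ * Real.cos θ + Real.sin φ * Real.sin θ)) by ring]
      rw [abs_mul, abs_of_nonneg (sq_nonneg r), abs_mul]
    rw [habs]
    simp only [NNReal.coe_one, mul_one, sub_zero]
    have hexp : rexp (-(r * Real.cos φ) ^ 2 / 2) * rexp (-(r * Real.sin φ) ^ 2 / 2)
        = rexp (-(r ^ 2) / 2) := by
      rw [← Real.exp_add]
      congr 1
      nlinarith [Real.sin_sq_add_cos_sq φ]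
    have hsq : (√(2 * π))⁻¹ * (√(2 * π))⁻¹ = (2 * π)⁻¹ := by
      rw [← mul_inv, Real.mul_self_sqrt (by positivity)]
    have hkey : (√(2 * π))⁻¹ * rexp (-(r * Real.cos φ) ^ 2 / 2) *
        ((√(2 * π))⁻¹ * rexp (-(r * Real.sin φ) ^ 2 / 2)) = (2 * π)⁻¹ * rexp (-(r ^ 2) / 2) := by
      rw [show (√(2 * π))⁻¹ * rexp (-(r * Real.cos φ) ^ 2 / 2) *
          ((√(2 * π))⁻¹ * rexp (-(r * Real.sin φ) ^ 2 / 2))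
        = ((√(2 * π))⁻¹ * (√(2 * π))⁻¹) *
          (rexp (-(r * Real.cos φ) ^ 2 / 2) * rexp (-(r * Real.sin φ) ^ 2 / 2)) by ring,
        hexp, hsq]
    rw [hkey]
    ring
  rw [setIntegral_congr_fun polarCoord.open_target.measurableSet hEq]
  rw [polarCoord_target, Measure.volume_eq_prod, ← Measure.prod_restrict,
    MeasureTheory.integral_prod_mul (f := fun r : ℝ => r ^ 3 * rexp (-(r ^ 2) / 2))
      (g := fun φ : ℝ => (2 * π)⁻¹ * |Real.cos φ * Real.cos (φ - θ)|)]
  rw [radial_aux, integral_const_mul, ← MeasureTheory.integral_Ioc_eq_integral_Ioo,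
    ← intervalIntegral.integral_of_le (by linarith : -π ≤ π), angular hθ0 hθ1]
  field_simp

set_option maxHeartbeats 1000000 in
/-- For independent standard normals `X, W`, `θ ∈ [0, π/2]`, `ρ = cos θ` and
`Y = X cos θ + W sin θ`, one has `E[|XY|] = (2/π)(√(1−ρ²) + ρ arcsin ρ)`. -/
theorem stmt_4 {Ω : Type*} [MeasurableSpace Ω] (P : Measure Ω) [IsProbabilityMeasure P]
    (X W : Ω → ℝ) (hXm : Measurable X) (hWm : Measurable W)
    (hindep : IndepFun X W P)
    (hX : Measure.map X P = gaussianReal 0 1) (hW : Measure.map W P = gaussianReal 0 1)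
    (θ ρ : ℝ) (hθ : θ ∈ Set.Icc (0 : ℝ) (π / 2)) (hρ : ρ = cos θ)
    (Y : Ω → ℝ) (hY : Y = fun ω => X ω * cos θ + W ω * sin θ) :
    ∫ ω, |X ω * Y ω| ∂P = (2 / π) * (Real.sqrt (1 - ρ ^ 2) + ρ * arcsin ρ) := by
  obtain ⟨hθ0, hθ1⟩ := hθ
  have hπ := Real.pi_pos
  subst hρ hY
  have hmap : Measure.map (fun ω => (X ω, W ω)) P
      = (gaussianReal 0 1).prod (gaussianReal 0 1) := by
    have h := (ProbabilityTheory.indepFun_iff_map_prod_eq_prod_map_map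
      hXm.aemeasurable hWm.aemeasurable).mp hindep
    rw [hX, hW] at h
    exact h
  have hF : Continuous fun p : ℝ × ℝ => |p.1 * (p.1 * Real.cos θ + p.2 * Real.sin θ)| := by
    continuity
  have step1 : ∫ ω, |X ω * (X ω * Real.cos θ + W ω * Real.sin θ)| ∂P
      = ∫ p : ℝ × ℝ, |p.1 * (p.1 * Real.cos θ + p.2 * Real.sin θ)|
          ∂((gaussianReal 0 1).prod (gaussianReal 0 1)) := by
    rw [← hmap, integral_map (hXm.prodMk hWm).aemeasurable hF.aestronglyMeasurable]
  rw [step1, gauss_prod_integral θ hθ0 hθ1]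
  have h1 : Real.sqrt (1 - Real.cos θ ^ 2) = Real.sin θ := by
    rw [show 1 - Real.cos θ ^ 2 = Real.sin θ ^ 2 by
        have := Real.sin_sq_add_cos_sq θ; linarith,
      Real.sqrt_sq (Real.sin_nonneg_of_nonneg_of_le_pi hθ0 (by linarith))]
  have h2 : Real.arcsin (Real.cos θ) = π / 2 - θ := by
    rw [← Real.sin_pi_div_two_sub θ]
    exact Real.arcsin_sin (by linarith) (by linarith)
  rw [h1, h2]
end

section
/- The function g(ρ) = (2√2/π) · [√((1−ρ²)/(1+ρ²)) + ρ·arcsin(ρ)/√(1+ρ²)] is monotonically increasing on [0, 1], with g(0) = 2√2/π and g(1) = 1. -/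
open Real

lemma aux_F_mono :
    MonotoneOn (fun ρ : ℝ => (2 * Real.sqrt 2 / π) *
      ((Real.sqrt (1 - ρ ^ 2) + ρ * arcsin ρ) / Real.sqrt (1 + ρ ^ 2)))
      (Set.Icc (0 : ℝ) 1) := by
  set C : ℝ := 2 * Real.sqrt 2 / π with hCdef
  have hC : 0 < C := by
    have := Real.pi_pos
    positivity
  set F : ℝ → ℝ := fun ρ : ℝ => C *
      ((Real.sqrt (1 - ρ ^ 2) + ρ * arcsin ρ) / Real.sqrt (1 + ρ ^ 2)) with hF
  have hderiv : ∀ x ∈ Set.Ioo (0:ℝ) 1, HasDerivAt F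
      (C * (((-(2*x)/(2*Real.sqrt (1-x^2)) + (1 * arcsin x + x * (1/Real.sqrt (1-x^2)))) *
        Real.sqrt (1+x^2) - (Real.sqrt (1-x^2) + x * arcsin x) * (2*x/(2*Real.sqrt (1+x^2)))) /
        (Real.sqrt (1+x^2))^2)) x := by
    intro x hx
    have ha : (0:ℝ) < 1 - x^2 := by nlinarith [hx.1, hx.2]
    have hb : (0:ℝ) < 1 + x^2 := by positivity
    have hA : HasDerivAt (fun ρ:ℝ => 1 - ρ^2) (-(2*x)) x := by
      simpa using ((hasDerivAt_pow 2 x).const_sub 1)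
    have hsa : HasDerivAt (fun ρ:ℝ => Real.sqrt (1-ρ^2)) (-(2*x)/(2*Real.sqrt (1-x^2))) x :=
      hA.sqrt (ne_of_gt ha)
    have harc : HasDerivAt Real.arcsin (1/Real.sqrt (1-x^2)) x :=
      Real.hasDerivAt_arcsin (by linarith [hx.1]) (ne_of_lt hx.2)
    have hm : HasDerivAt (fun ρ:ℝ => ρ * arcsin ρ) (1 * arcsin x + x * (1/Real.sqrt (1-x^2))) x :=
      (hasDerivAt_id x).mul harc
    have hB : HasDerivAt (fun ρ:ℝ => 1 + ρ^2) (2*x) x := by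
      simpa using ((hasDerivAt_pow 2 x).const_add 1)
    have hsb : HasDerivAt (fun ρ:ℝ => Real.sqrt (1+ρ^2)) ((2*x)/(2*Real.sqrt (1+x^2))) x :=
      hB.sqrt (by positivity)
    exact ((hsa.add hm).div hsb (by positivity)).const_mul C
  apply monotoneOn_of_deriv_nonneg (convex_Icc 0 1)
  · -- continuity
    apply ContinuousOn.mul continuousOn_const
    apply ContinuousOn.div
    · exact ((Real.continuous_sqrt.comp (by continuity)).add
        (continuous_id.mul Real.continuous_arcsin)).continuousOn
    · exact (Real.continuous_sqrt.comp (by continuity)).continuousOn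
    · intro x _
      have : (0:ℝ) < 1 + x^2 := by positivity
      exact ne_of_gt (Real.sqrt_pos.mpr this)
  · -- differentiability on interior
    rw [interior_Icc]
    intro x hx
    exact ((hderiv x hx).differentiableAt).differentiableWithinAt
  · rw [interior_Icc]
    intro x hx
    rw [(hderiv x hx).deriv]
    have hx0 : 0 < x := hx.1
    have hx1 : x < 1 := hx.2
    have ha : (0:ℝ) < 1 - x^2 := by nlinarith
    have hb : (0:ℝ) < 1 + x^2 := by positivity
    set a := Real.sqrt (1-x^2) with hadef
    set b := Real.sqrt (1+x^2) with hbdef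
    have ha' : 0 < a := Real.sqrt_pos.mpr ha
    have hb' : 0 < b := Real.sqrt_pos.mpr hb
    have ha2 : a^2 = 1 - x^2 := Real.sq_sqrt ha.le
    have hb2 : b^2 = 1 + x^2 := Real.sq_sqrt hb.le
    have hale : a ≤ 1 := Real.sqrt_le_one.mpr (by nlinarith)
    have harcge : x ≤ arcsin x := by
      have h1 : Real.sin (arcsin x) = x := Real.sin_arcsin (by linarith) hx1.le
      have h2 : 0 < arcsin x := Real.arcsin_pos.mpr hx0
      have := Real.sin_lt h2
      rw [h1] at this
      linarith
    have hkey : 0 ≤ arcsin x - x * a := by nlinarith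
    have heq : C * (((-(2*x)/(2*a) + (1 * arcsin x + x * (1/a))) * b -
        (a + x * arcsin x) * (2*x/(2*b))) / b^2) = C * (arcsin x - x * a) / b^3 := by
      field_simp
      linear_combination (a * Real.arcsin x) * hb2
    rw [heq]
    positivity

/-- The function `g(ρ) = (2√2/π)[√((1−ρ²)/(1+ρ²)) + ρ arcsin(ρ)/√(1+ρ²)]` is
monotonically increasing on `[0,1]`, with `g(0) = 2√2/π` and `g(1) = 1`. -/
theorem stmt_5 :
    let g : ℝ → ℝ := fun ρ =>
      (2 * Real.sqrt 2 / π) *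
        (Real.sqrt ((1 - ρ ^ 2) / (1 + ρ ^ 2)) + ρ * arcsin ρ / Real.sqrt (1 + ρ ^ 2))
    MonotoneOn g (Set.Icc (0 : ℝ) 1) ∧ g 0 = 2 * Real.sqrt 2 / π ∧ g 1 = 1 := by
  intro g
  have hEq : ∀ ρ ∈ Set.Icc (0:ℝ) 1, g ρ = (2 * Real.sqrt 2 / π) *
      ((Real.sqrt (1 - ρ ^ 2) + ρ * arcsin ρ) / Real.sqrt (1 + ρ ^ 2)) := by
    intro ρ hρ
    have h1 : (0:ℝ) ≤ 1 - ρ^2 := by nlinarith [hρ.1, hρ.2]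
    show (2 * Real.sqrt 2 / π) * (Real.sqrt ((1 - ρ ^ 2) / (1 + ρ ^ 2)) + ρ * arcsin ρ / Real.sqrt (1 + ρ ^ 2)) = _
    rw [Real.sqrt_div h1]
    ring
  refine ⟨?_, ?_, ?_⟩
  · intro a ha b hb hab
    rw [hEq a ha, hEq b hb]
    exact aux_F_mono ha hb hab
  · show (2 * Real.sqrt 2 / π) * (Real.sqrt ((1 - 0 ^ 2) / (1 + 0 ^ 2)) + 0 * arcsin 0 / Real.sqrt (1 + 0 ^ 2)) = _
    norm_num
  · show (2 * Real.sqrt 2 / π) * (Real.sqrt ((1 - 1 ^ 2) / (1 + 1 ^ 2)) + 1 * arcsin 1 / Real.sqrt (1 + 1 ^ 2)) = 1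
    have hs2 : Real.sqrt 2 ≠ 0 := by positivity
    have hπ : (π:ℝ) ≠ 0 := Real.pi_ne_zero
    have h0 : Real.sqrt ((1 - 1 ^ 2) / (1 + 1 ^ 2)) = 0 := by norm_num
    rw [h0, Real.arcsin_one]
    have h2 : Real.sqrt 2 * Real.sqrt 2 = 2 := Real.mul_self_sqrt (by norm_num)
    field_simp
    norm_num
    ring
end

section
/- Let x, x₀, y, y₀ be unit vectors in ℝⁿ with ‖x − x₀‖₂ ≤ ε and ‖y − y₀‖₂ ≤ ε, and let X = x yᵀ + y xᵀ, X₀ = x₀ y₀ᵀ + y₀ x₀ᵀ. Then the normalized matrices satisfy ‖X/‖X‖_F − X₀/‖X₀‖_F‖₁ ≤ 12ε, where ‖·‖₁ denotes the nuclear norm. -/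
open Matrix

/-- The spectral (operator) norm of a real square matrix. -/
noncomputable def opNorm {n : ℕ} (A : Matrix (Fin n) (Fin n) ℝ) : ℝ :=
  ‖Matrix.toEuclideanCLM (𝕜 := ℝ) A‖

/-- The nuclear norm, defined by duality with the operator norm. -/
noncomputable def nuclearNorm {n : ℕ} (A : Matrix (Fin n) (Fin n) ℝ) : ℝ :=
  sSup {r : ℝ | ∃ B : Matrix (Fin n) (Fin n) ℝ, opNorm B ≤ 1 ∧ r = Matrix.trace (A * Bᵀ)}

/-- The Frobenius norm of a real square matrix. -/
noncomputable def frob {n : ℕ} (A : Matrix (Fin n) (Fin n) ℝ) : ℝ :=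
  Real.sqrt (∑ i, ∑ j, A i j ^ 2)

lemma trace_vecMulVec_mul {n : ℕ} (u v : Fin n → ℝ) (B : Matrix (Fin n) (Fin n) ℝ)
    (hB : opNorm B ≤ 1) :
    |Matrix.trace (vecMulVec u v * Bᵀ)| ≤
      Real.sqrt (∑ i, u i ^ 2) * Real.sqrt (∑ i, v i ^ 2) := by
  set u' : EuclideanSpace ℝ (Fin n) := (WithLp.equiv 2 _).symm u
  set v' : EuclideanSpace ℝ (Fin n) := (WithLp.equiv 2 _).symm v
  have h1 : Matrix.trace (vecMulVec u v * Bᵀ) =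
      (inner ℝ u' (Matrix.toEuclideanCLM (𝕜 := ℝ) B v') : ℝ) := by
    rw [Matrix.toEuclideanCLM_toLp]
    simp only [Matrix.trace, Matrix.diag, Matrix.mul_apply, vecMulVec_apply,
      Matrix.transpose_apply, PiLp.inner_apply, RCLike.inner_apply, conj_trivial]
    simp only [u', v', WithLp.equiv_symm_apply, PiLp.toLp_apply, Matrix.toLin'_apply, Matrix.mulVec,
      dotProduct, Finset.mul_sum, Finset.sum_mul]
    exact Finset.sum_congr rfl fun i _ => Finset.sum_congr rfl fun j _ => by ring
  have hu : ‖u'‖ = Real.sqrt (∑ i, u i ^ 2) := by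
    rw [EuclideanSpace.norm_eq]
    congr 1
    exact Finset.sum_congr rfl fun i _ => by
      simp [u', Real.norm_eq_abs, sq_abs]
  have hv : ‖v'‖ = Real.sqrt (∑ i, v i ^ 2) := by
    rw [EuclideanSpace.norm_eq]
    congr 1
    exact Finset.sum_congr rfl fun i _ => by
      simp [v', Real.norm_eq_abs, sq_abs]
  have hTv : ‖Matrix.toEuclideanCLM (𝕜 := ℝ) B v'‖ ≤ ‖v'‖ := by
    calc ‖Matrix.toEuclideanCLM (𝕜 := ℝ) B v'‖ ≤ ‖Matrix.toEuclideanCLM (𝕜 := ℝ) B‖ * ‖v'‖ :=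
        ContinuousLinearMap.le_opNorm _ _
      _ ≤ 1 * ‖v'‖ := mul_le_mul_of_nonneg_right hB (norm_nonneg _)
      _ = ‖v'‖ := one_mul _
  rw [h1, ← hu, ← hv]
  calc |(inner ℝ u' (Matrix.toEuclideanCLM (𝕜 := ℝ) B v') : ℝ)|
      ≤ ‖u'‖ * ‖Matrix.toEuclideanCLM (𝕜 := ℝ) B v'‖ := abs_real_inner_le_norm _ _
    _ ≤ ‖u'‖ * ‖v'‖ := mul_le_mul_of_nonneg_left hTv (norm_nonneg _)

lemma frob_eq_norm {n : ℕ} (A : Matrix (Fin n) (Fin n) ℝ) :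
    frob A = ‖((WithLp.equiv 2 (Fin n × Fin n → ℝ)).symm (fun p => A p.1 p.2) :
      EuclideanSpace ℝ (Fin n × Fin n))‖ := by
  rw [EuclideanSpace.norm_eq, Fintype.sum_prod_type, frob]
  congr 1
  exact Finset.sum_congr rfl fun p _ => by
    simp [WithLp.equiv_symm_apply, Real.norm_eq_abs, sq_abs]

lemma abs_frob_sub_frob {n : ℕ} (A B : Matrix (Fin n) (Fin n) ℝ) :
    |frob A - frob B| ≤ frob (A - B) := by
  rw [frob_eq_norm A, frob_eq_norm B, frob_eq_norm (A - B)]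
  have : ((WithLp.equiv 2 (Fin n × Fin n → ℝ)).symm (fun p => (A - B) p.1 p.2) :
      EuclideanSpace ℝ (Fin n × Fin n)) =
      (WithLp.equiv 2 (Fin n × Fin n → ℝ)).symm (fun p => A p.1 p.2) -
      (WithLp.equiv 2 (Fin n × Fin n → ℝ)).symm (fun p => B p.1 p.2) := by
    rw [WithLp.equiv_symm_apply, ← WithLp.toLp_sub]
    rfl
  rw [this]
  exact abs_norm_sub_norm_le _ _

lemma frob_add_le {n : ℕ} (A B : Matrix (Fin n) (Fin n) ℝ) :
    frob (A + B) ≤ frob A + frob B := by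
  rw [frob_eq_norm A, frob_eq_norm B, frob_eq_norm (A + B)]
  have : ((WithLp.equiv 2 (Fin n × Fin n → ℝ)).symm (fun p => (A + B) p.1 p.2) :
      EuclideanSpace ℝ (Fin n × Fin n)) =
      (WithLp.equiv 2 (Fin n × Fin n → ℝ)).symm (fun p => A p.1 p.2) +
      (WithLp.equiv 2 (Fin n × Fin n → ℝ)).symm (fun p => B p.1 p.2) := by
    rw [WithLp.equiv_symm_apply, ← WithLp.toLp_add]
    rfl
  rw [this]
  exact norm_add_le _ _

lemma frob_vecMulVec {n : ℕ} (u v : Fin n → ℝ) :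
    frob (vecMulVec u v) = Real.sqrt (∑ i, u i ^ 2) * Real.sqrt (∑ i, v i ^ 2) := by
  rw [frob, ← Real.sqrt_mul (by positivity)]
  congr 1
  rw [Finset.sum_mul_sum]
  exact Finset.sum_congr rfl fun i _ => Finset.sum_congr rfl fun j _ => by
    simp [vecMulVec_apply]; ring

lemma sqrt_two_le_frob {n : ℕ} (x y : Fin n → ℝ) (hx : ∑ i, x i ^ 2 = 1)
    (hy : ∑ i, y i ^ 2 = 1) :
    Real.sqrt 2 ≤ frob (vecMulVec x y + vecMulVec y x) := by
  rw [frob]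
  apply Real.sqrt_le_sqrt
  have key : ∑ i, ∑ j, (vecMulVec x y + vecMulVec y x) i j ^ 2 =
      2 + 2 * (∑ i, x i * y i) ^ 2 := by
    have : ∀ i j, (vecMulVec x y + vecMulVec y x) i j ^ 2 =
        x i ^ 2 * y j ^ 2 + 2 * ((x i * y i) * (x j * y j)) + y i ^ 2 * x j ^ 2 := by
      intro i j; simp [vecMulVec_apply, Matrix.add_apply]; ring
    simp_rw [this, Finset.sum_add_distrib, ← Finset.mul_sum, ← Finset.sum_mul]
    rw [hx, hy]; ring
  rw [key]; nlinarith [sq_nonneg (∑ i, x i * y i)]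

/-- For unit vectors `x, x₀, y, y₀` with `‖x − x₀‖₂ ≤ ε`, `‖y − y₀‖₂ ≤ ε`, and
`X = xyᵀ + yxᵀ`, `X₀ = x₀y₀ᵀ + y₀x₀ᵀ`, the normalized matrices satisfy
`‖X/‖X‖_F − X₀/‖X₀‖_F‖₁ ≤ 12ε` in nuclear norm. -/
theorem stmt_10 {n : ℕ} (x x₀ y y₀ : Fin n → ℝ) (ε : ℝ) (hε : 0 < ε) (hε1 : ε ≤ 1)
    (hx : ∑ i, x i ^ 2 = 1) (hx₀ : ∑ i, x₀ i ^ 2 = 1)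
    (hy : ∑ i, y i ^ 2 = 1) (hy₀ : ∑ i, y₀ i ^ 2 = 1)
    (hxx : Real.sqrt (∑ i, (x i - x₀ i) ^ 2) ≤ ε)
    (hyy : Real.sqrt (∑ i, (y i - y₀ i) ^ 2) ≤ ε) :
    nuclearNorm ((frob (vecMulVec x y + vecMulVec y x))⁻¹ • (vecMulVec x y + vecMulVec y x) -
        (frob (vecMulVec x₀ y₀ + vecMulVec y₀ x₀))⁻¹ • (vecMulVec x₀ y₀ + vecMulVec y₀ x₀)) ≤
      12 * ε := by
  set X := vecMulVec x y + vecMulVec y x with hXdef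
  set X₀ := vecMulVec x₀ y₀ + vecMulVec y₀ x₀ with hX₀def
  have hsx : Real.sqrt (∑ i, x i ^ 2) = 1 := by rw [hx, Real.sqrt_one]
  have hsx₀ : Real.sqrt (∑ i, x₀ i ^ 2) = 1 := by rw [hx₀, Real.sqrt_one]
  have hsy : Real.sqrt (∑ i, y i ^ 2) = 1 := by rw [hy, Real.sqrt_one]
  have hsy₀ : Real.sqrt (∑ i, y₀ i ^ 2) = 1 := by rw [hy₀, Real.sqrt_one]
  have h12 : (1 : ℝ) ≤ Real.sqrt 2 := by
    nlinarith [Real.sq_sqrt (show (0:ℝ) ≤ 2 by norm_num), Real.sqrt_nonneg 2]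
  have hf : Real.sqrt 2 ≤ frob X := sqrt_two_le_frob x y hx hy
  have hf₀ : Real.sqrt 2 ≤ frob X₀ := sqrt_two_le_frob x₀ y₀ hx₀ hy₀
  have hf1 : (1 : ℝ) ≤ frob X := le_trans h12 hf
  have hf₀1 : (1 : ℝ) ≤ frob X₀ := le_trans h12 hf₀
  have hfpos : (0 : ℝ) < frob X := lt_of_lt_of_le one_pos hf1
  have hf₀pos : (0 : ℝ) < frob X₀ := lt_of_lt_of_le one_pos hf₀1
  have hff₀ : (2 : ℝ) ≤ frob X * frob X₀ := by
    calc (2 : ℝ) = Real.sqrt 2 * Real.sqrt 2 :=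
          (Real.mul_self_sqrt (by norm_num)).symm
      _ ≤ frob X * frob X₀ := by
          apply mul_le_mul hf hf₀ (Real.sqrt_nonneg 2) (le_of_lt hfpos)
  -- decomposition of the difference
  have hdec : X - X₀ = vecMulVec (x - x₀) y + vecMulVec x₀ (y - y₀) +
      (vecMulVec (y - y₀) x + vecMulVec y₀ (x - x₀)) := by
    ext i j
    simp only [hXdef, hX₀def, Matrix.sub_apply, Matrix.add_apply, vecMulVec_apply, Pi.sub_apply]
    ring
  -- frobenius bounds on the rank-one pieces
  have hdx : Real.sqrt (∑ i, (x - x₀) i ^ 2) ≤ ε := by simpa using hxx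
  have hdy : Real.sqrt (∑ i, (y - y₀) i ^ 2) ≤ ε := by simpa using hyy
  have hfd : frob (X - X₀) ≤ 4 * ε := by
    rw [hdec]
    calc frob (vecMulVec (x - x₀) y + vecMulVec x₀ (y - y₀) +
          (vecMulVec (y - y₀) x + vecMulVec y₀ (x - x₀)))
        ≤ frob (vecMulVec (x - x₀) y + vecMulVec x₀ (y - y₀)) +
          frob (vecMulVec (y - y₀) x + vecMulVec y₀ (x - x₀)) := frob_add_le _ _
      _ ≤ (frob (vecMulVec (x - x₀) y) + frob (vecMulVec x₀ (y - y₀))) +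
          (frob (vecMulVec (y - y₀) x) + frob (vecMulVec y₀ (x - x₀))) :=
            add_le_add (frob_add_le _ _) (frob_add_le _ _)
      _ ≤ (ε * 1 + 1 * ε) + (ε * 1 + 1 * ε) := by
          apply add_le_add <;> apply add_le_add <;> rw [frob_vecMulVec]
          · rw [hsy]; exact mul_le_mul_of_nonneg_right hdx zero_le_one
          · rw [hsx₀]; exact mul_le_mul_of_nonneg_left hdy zero_le_one
          · rw [hsx]; exact mul_le_mul_of_nonneg_right hdy zero_le_one
          · rw [hsy₀]; exact mul_le_mul_of_nonneg_left hdx zero_le_one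
      _ = 4 * ε := by ring
  have hffdiff : |frob X - frob X₀| ≤ 4 * ε := le_trans (abs_frob_sub_frob _ _) hfd
  -- the coefficients
  have hc1 : (frob X)⁻¹ ≤ 1 := inv_le_one_of_one_le₀ hf1
  have hcpos : (0 : ℝ) < (frob X)⁻¹ := inv_pos.mpr hfpos
  have hcc : |(frob X)⁻¹ - (frob X₀)⁻¹| ≤ 2 * ε := by
    rw [inv_sub_inv (ne_of_gt hfpos) (ne_of_gt hf₀pos), abs_div, abs_of_pos
      (mul_pos hfpos hf₀pos)]
    calc |frob X₀ - frob X| / (frob X * frob X₀) ≤ (4 * ε) / 2 := by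
          apply div_le_div₀ (by positivity) _ (by norm_num) hff₀
          rw [abs_sub_comm]; exact hffdiff
      _ = 2 * ε := by ring
  apply Real.sSup_le
  · rintro r ⟨B, hB, rfl⟩
    have hsplit : Matrix.trace (((frob X)⁻¹ • X - (frob X₀)⁻¹ • X₀) * Bᵀ) =
        (frob X)⁻¹ * (Matrix.trace (X * Bᵀ) - Matrix.trace (X₀ * Bᵀ)) +
        ((frob X)⁻¹ - (frob X₀)⁻¹) * Matrix.trace (X₀ * Bᵀ) := by
      rw [Matrix.sub_mul, Matrix.trace_sub, Matrix.smul_mul, Matrix.smul_mul,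
        Matrix.trace_smul, Matrix.trace_smul, smul_eq_mul, smul_eq_mul]
      ring
    have hTX₀ : |Matrix.trace (X₀ * Bᵀ)| ≤ 2 := by
      rw [hX₀def, Matrix.add_mul, Matrix.trace_add]
      calc |Matrix.trace (vecMulVec x₀ y₀ * Bᵀ) + Matrix.trace (vecMulVec y₀ x₀ * Bᵀ)|
          ≤ |Matrix.trace (vecMulVec x₀ y₀ * Bᵀ)| + |Matrix.trace (vecMulVec y₀ x₀ * Bᵀ)| :=
            abs_add_le _ _
        _ ≤ 1 * 1 + 1 * 1 := by
            apply add_le_add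
            · have := trace_vecMulVec_mul x₀ y₀ B hB; rwa [hsx₀, hsy₀] at this
            · have := trace_vecMulVec_mul y₀ x₀ B hB; rwa [hsy₀, hsx₀] at this
        _ = 2 := by norm_num
    have hTD : |Matrix.trace (X * Bᵀ) - Matrix.trace (X₀ * Bᵀ)| ≤ 4 * ε := by
      have e : Matrix.trace (X * Bᵀ) - Matrix.trace (X₀ * Bᵀ) =
          Matrix.trace ((X - X₀) * Bᵀ) := by
        rw [Matrix.sub_mul, Matrix.trace_sub]
      rw [e, hdec, Matrix.add_mul, Matrix.add_mul, Matrix.add_mul, Matrix.trace_add,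
        Matrix.trace_add, Matrix.trace_add]
      have b1 := trace_vecMulVec_mul (x - x₀) y B hB
      have b2 := trace_vecMulVec_mul x₀ (y - y₀) B hB
      have b3 := trace_vecMulVec_mul (y - y₀) x B hB
      have b4 := trace_vecMulVec_mul y₀ (x - x₀) B hB
      rw [hsy] at b1; rw [hsx₀] at b2; rw [hsx] at b3; rw [hsy₀] at b4
      have b1' : |Matrix.trace (vecMulVec (x - x₀) y * Bᵀ)| ≤ ε := by
        calc _ ≤ Real.sqrt (∑ i, (x - x₀) i ^ 2) * 1 := b1
          _ ≤ ε := by rw [mul_one]; exact hdx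
      have b2' : |Matrix.trace (vecMulVec x₀ (y - y₀) * Bᵀ)| ≤ ε := by
        calc _ ≤ 1 * Real.sqrt (∑ i, (y - y₀) i ^ 2) := b2
          _ ≤ ε := by rw [one_mul]; exact hdy
      have b3' : |Matrix.trace (vecMulVec (y - y₀) x * Bᵀ)| ≤ ε := by
        calc _ ≤ Real.sqrt (∑ i, (y - y₀) i ^ 2) * 1 := b3
          _ ≤ ε := by rw [mul_one]; exact hdy
      have b4' : |Matrix.trace (vecMulVec y₀ (x - x₀) * Bᵀ)| ≤ ε := by
        calc _ ≤ 1 * Real.sqrt (∑ i, (x - x₀) i ^ 2) := b4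
          _ ≤ ε := by rw [one_mul]; exact hdx
      calc |Matrix.trace (vecMulVec (x - x₀) y * Bᵀ) + Matrix.trace (vecMulVec x₀ (y - y₀) * Bᵀ) +
            (Matrix.trace (vecMulVec (y - y₀) x * Bᵀ) + Matrix.trace (vecMulVec y₀ (x - x₀) * Bᵀ))|
          ≤ |Matrix.trace (vecMulVec (x - x₀) y * Bᵀ) + Matrix.trace (vecMulVec x₀ (y - y₀) * Bᵀ)| +
            |Matrix.trace (vecMulVec (y - y₀) x * Bᵀ) + Matrix.trace (vecMulVec y₀ (x - x₀) * Bᵀ)| :=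
            abs_add_le _ _
        _ ≤ (|Matrix.trace (vecMulVec (x - x₀) y * Bᵀ)| + |Matrix.trace (vecMulVec x₀ (y - y₀) * Bᵀ)|) +
            (|Matrix.trace (vecMulVec (y - y₀) x * Bᵀ)| + |Matrix.trace (vecMulVec y₀ (x - x₀) * Bᵀ)|) :=
            add_le_add (abs_add_le _ _) (abs_add_le _ _)
        _ ≤ (ε + ε) + (ε + ε) := add_le_add (add_le_add b1' b2') (add_le_add b3' b4')
        _ = 4 * ε := by ring
    rw [hsplit]
    have habs : |(frob X)⁻¹ * (Matrix.trace (X * Bᵀ) - Matrix.trace (X₀ * Bᵀ)) +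
        ((frob X)⁻¹ - (frob X₀)⁻¹) * Matrix.trace (X₀ * Bᵀ)| ≤ 12 * ε := by
      calc |(frob X)⁻¹ * (Matrix.trace (X * Bᵀ) - Matrix.trace (X₀ * Bᵀ)) +
            ((frob X)⁻¹ - (frob X₀)⁻¹) * Matrix.trace (X₀ * Bᵀ)|
          ≤ |(frob X)⁻¹ * (Matrix.trace (X * Bᵀ) - Matrix.trace (X₀ * Bᵀ))| +
            |((frob X)⁻¹ - (frob X₀)⁻¹) * Matrix.trace (X₀ * Bᵀ)| := abs_add_le _ _
        _ = |(frob X)⁻¹| * |Matrix.trace (X * Bᵀ) - Matrix.trace (X₀ * Bᵀ)| +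
            |(frob X)⁻¹ - (frob X₀)⁻¹| * |Matrix.trace (X₀ * Bᵀ)| := by
            rw [abs_mul, abs_mul]
        _ ≤ 1 * (4 * ε) + (2 * ε) * 2 := by
            apply add_le_add
            · exact mul_le_mul (by rwa [abs_of_pos hcpos]) hTD (abs_nonneg _) zero_le_one
            · exact mul_le_mul hcc hTX₀ (abs_nonneg _) (by positivity)
        _ = 8 * ε := by ring
        _ ≤ 12 * ε := by nlinarith
    exact le_trans (le_abs_self _) habs
  · positivity
end

section
/- Under the hypotheses of the core lemma: A satisfies (1/m)‖A(X)‖₁ ≤ (1+δ)‖X‖₁ for PSD X and the s-robust outlier bound condition with constant C(s) on the tangent space T, and there exists Y = A*(y) with Y_{T⊥} ⪰ λ₀ I_{T⊥}, ‖Y_T‖_F ≤ Δ, and coefficients satisfying yᵢ = −κ·sgn(zᵢ) for i ∈ supp(z) and |yᵢ| ≤ κ otherwise (κ = (9−β₀)/m). If Ω := λ₀·C(s)/(1+δ) − Δ > 0, then any minimizer X̂ of the robust PhaseLift program satisfies ‖X̂ − x₀x₀ᵀ‖_F ≤ C₀‖ω‖₁/m with C₀ = (18 − 2β₀ + 2λ₀)(1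 + Δ/λ₀)/Ω + (18 − 2β₀)/λ₀. -/
open Matrix

set_option synthInstance.maxHeartbeats 1000000
set_option maxHeartbeats 2000000

/-- The measurement map `A(X)ᵢ = aᵢᵀ X aᵢ`. -/
def Ameas {n m : ℕ} (a : Fin m → Fin n → ℝ) (X : Matrix (Fin n) (Fin n) ℝ) : Fin m → ℝ :=
  fun i => dotProduct (a i) (X.mulVec (a i))

/-- Projection onto the tangent space `T` at `x₀`. -/
def tangentPart {n : ℕ} (x₀ : Fin n → ℝ) (H : Matrix (Fin n) (Fin n) ℝ) :
    Matrix (Fin n) (Fin n) ℝ :=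
  vecMulVec x₀ x₀ * H + (1 - vecMulVec x₀ x₀) * H * vecMulVec x₀ x₀

/-- Projection onto `T⊥`. -/
def normalPart {n : ℕ} (x₀ : Fin n → ℝ) (H : Matrix (Fin n) (Fin n) ℝ) :
    Matrix (Fin n) (Fin n) ℝ :=
  (1 - vecMulVec x₀ x₀) * H * (1 - vecMulVec x₀ x₀)

/-- `β₀ = E[X⁴ 1{|X| ≤ 3}]` for `X` standard normal. -/
noncomputable def beta0 : ℝ :=
  ∫ x, (if |x| ≤ 3 then x ^ 4 else 0) ∂(ProbabilityTheory.gaussianReal 0 1)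

/- ### Frobenius norm facts -/

lemma frob_nonneg {n : ℕ} (A : Matrix (Fin n) (Fin n) ℝ) : 0 ≤ frob A := Real.sqrt_nonneg _

lemma frob_sq {n : ℕ} (A : Matrix (Fin n) (Fin n) ℝ) : frob A ^ 2 = ∑ i, ∑ j, A i j ^ 2 := by
  rw [frob, Real.sq_sqrt]; positivity

lemma frob_cs {n : ℕ} (A B : Matrix (Fin n) (Fin n) ℝ) :
    |∑ i, ∑ j, A i j * B i j| ≤ frob A * frob B := by
  have h := Finset.sum_mul_sq_le_sq_mul_sq Finset.univ
      (fun p : Fin n × Fin n => A p.1 p.2) (fun p => B p.1 p.2)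
  have h1 : (∑ p : Fin n × Fin n, A p.1 p.2 * B p.1 p.2) = ∑ i, ∑ j, A i j * B i j :=
    Fintype.sum_prod_type _
  have h2 : (∑ p : Fin n × Fin n, A p.1 p.2 ^ 2) = ∑ i, ∑ j, A i j ^ 2 :=
    Fintype.sum_prod_type _
  have h3 : (∑ p : Fin n × Fin n, B p.1 p.2 ^ 2) = ∑ i, ∑ j, B i j ^ 2 :=
    Fintype.sum_prod_type _
  rw [h1, h2, h3, ← frob_sq, ← frob_sq] at h
  calc |∑ i, ∑ j, A i j * B i j| = Real.sqrt ((∑ i, ∑ j, A i j * B i j) ^ 2) :=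
        (Real.sqrt_sq_eq_abs _).symm
    _ ≤ Real.sqrt ((frob A * frob B) ^ 2) := by
        apply Real.sqrt_le_sqrt; rw [mul_pow]; exact h
    _ = frob A * frob B := by
        rw [Real.sqrt_sq (mul_nonneg (frob_nonneg A) (frob_nonneg B))]

/- ### PSD facts -/

lemma psd_diag_nonneg {n : ℕ} {M : Matrix (Fin n) (Fin n) ℝ} (hM : M.PosSemidef) (i : Fin n) :
    0 ≤ M i i := by
  exact hM.diag_nonneg

lemma psd_dot {n : ℕ} {M : Matrix (Fin n) (Fin n) ℝ} (hM : M.PosSemidef) (x : Fin n → ℝ) :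
    0 ≤ dotProduct x (M.mulVec x) := by
  simpa using hM.dotProduct_mulVec_nonneg x

lemma psd_trace_nonneg {n : ℕ} {M : Matrix (Fin n) (Fin n) ℝ} (hM : M.PosSemidef) :
    0 ≤ Matrix.trace M :=
  Finset.sum_nonneg fun i _ => psd_diag_nonneg hM i

lemma herm_symm {n : ℕ} {M : Matrix (Fin n) (Fin n) ℝ} (hM : M.IsHermitian) (i j : Fin n) :
    M j i = M i j := by
  have := hM.apply i j
  simpa using this

lemma psd_entry_sq_le {n : ℕ} {M : Matrix (Fin n) (Fin n) ℝ} (hM : M.PosSemidef) (i j : Fin n) :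
    M i j ^ 2 ≤ M i i * M j j := by
  rcases eq_or_ne i j with rfl | hij
  · nlinarith [psd_diag_nonneg hM i]
  have hsym : M j i = M i j := herm_symm hM.1 i j
  have key : ∀ t : ℝ, 0 ≤ M i i * (t * t) + (2 * M i j) * t + M j j := by
    intro t
    have h := psd_dot hM (fun k => if k = i then t else if k = j then 1 else 0)
    have e : dotProduct (fun k => if k = i then t else if k = j then 1 else 0)
        (M.mulVec (fun k => if k = i then t else if k = j then 1 else 0))
        = M i i * (t * t) + (2 * M i j) * t + M j j := by
      simp only [dotProduct, mulVec]
      rw [Finset.sum_eq_add_of_mem i j (Finset.mem_univ i) (Finset.mem_univ j) hij ?_]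
      · simp only [if_pos rfl, if_neg hij, if_neg (Ne.symm hij), dotProduct]
        rw [Finset.sum_eq_add_of_mem i j (Finset.mem_univ i) (Finset.mem_univ j) hij ?_,
            Finset.sum_eq_add_of_mem i j (Finset.mem_univ i) (Finset.mem_univ j) hij ?_]
        · simp [if_neg hij, if_neg (Ne.symm hij), hsym]; ring
        · intro k _ hk; rcases hk with ⟨hki, hkj⟩; simp [hki, hkj]
        · intro k _ hk; rcases hk with ⟨hki, hkj⟩; simp [hki, hkj]
      · intro k _ hk; rcases hk with ⟨hki, hkj⟩; simp [hki, hkj]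
    rw [e] at h; exact h
  have hd := discrim_le_zero key
  rw [discrim] at hd
  nlinarith

lemma psd_frob_le_trace {n : ℕ} {M : Matrix (Fin n) (Fin n) ℝ} (hM : M.PosSemidef) :
    frob M ≤ Matrix.trace M := by
  have h1 : ∑ i, ∑ j, M i j ^ 2 ≤ (Matrix.trace M) ^ 2 := by
    have e : (Matrix.trace M) ^ 2 = ∑ i, ∑ j, M i i * M j j := by
      rw [Matrix.trace, sq, Finset.sum_mul_sum]
      rfl
    rw [e]
    exact Finset.sum_le_sum fun i _ => Finset.sum_le_sum fun j _ => psd_entry_sq_le hM i j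
  calc frob M = Real.sqrt (∑ i, ∑ j, M i j ^ 2) := rfl
    _ ≤ Real.sqrt ((Matrix.trace M) ^ 2) := Real.sqrt_le_sqrt h1
    _ = |Matrix.trace M| := Real.sqrt_sq_eq_abs _
    _ = Matrix.trace M := abs_of_nonneg (psd_trace_nonneg hM)

open scoped MatrixOrder in
lemma psd_exists_sqrt {n : ℕ} {A : Matrix (Fin n) (Fin n) ℝ} (hA : A.PosSemidef) :
    ∃ S : Matrix (Fin n) (Fin n) ℝ, Sᴴ = S ∧ S * S = A :=
  ⟨CFC.sqrt A, (CFC.sqrt_nonneg A).posSemidef.1, CFC.sqrt_mul_sqrt_self A hA.nonneg⟩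

lemma psd_trace_mul_nonneg {n : ℕ} {A B : Matrix (Fin n) (Fin n) ℝ}
    (hA : A.PosSemidef) (hB : B.PosSemidef) : 0 ≤ Matrix.trace (A * B) := by
  obtain ⟨S, hSsym, hSS⟩ := psd_exists_sqrt hA
  have key := hB.mul_mul_conjTranspose_same S
  rw [hSsym] at key
  have e : Matrix.trace (A * B) = Matrix.trace (S * B * S) :=
    calc Matrix.trace (A * B) = Matrix.trace ((S * S) * B) := by rw [hSS]
      _ = Matrix.trace (S * (S * B)) := by rw [Matrix.mul_assoc]
      _ = Matrix.trace ((S * B) * S) := by rw [Matrix.trace_mul_comm]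
  rw [e]
  exact psd_trace_nonneg key

/- ### nuclear norm facts -/

lemma dot_cs (n : ℕ) (u w : Fin n → ℝ) :
    dotProduct u w ≤ Real.sqrt (∑ k, u k ^ 2) * Real.sqrt (∑ k, w k ^ 2) := by
  have h := Finset.sum_mul_sq_le_sq_mul_sq Finset.univ u w
  calc dotProduct u w ≤ |∑ k, u k * w k| := le_abs_self _
    _ = Real.sqrt ((∑ k, u k * w k) ^ 2) := (Real.sqrt_sq_eq_abs _).symm
    _ ≤ Real.sqrt ((∑ k, u k ^ 2) * (∑ k, w k ^ 2)) := Real.sqrt_le_sqrt h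
    _ = _ := Real.sqrt_mul (by positivity) _

lemma mulVec_l2_le {n : ℕ} (A : Matrix (Fin n) (Fin n) ℝ) (v : Fin n → ℝ) :
    Real.sqrt (∑ j, (A.mulVec v) j ^ 2) ≤ opNorm A * Real.sqrt (∑ j, v j ^ 2) := by
  have key := (Matrix.toEuclideanCLM (𝕜 := ℝ) A).le_opNorm (WithLp.toLp 2 v)
  rw [Matrix.toEuclideanCLM_toLp] at key
  have e1 : ∀ w : Fin n → ℝ, ‖WithLp.toLp 2 w‖ = Real.sqrt (∑ j, w j ^ 2) := by
    intro w
    rw [EuclideanSpace.norm_eq]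
    congr 1; refine Finset.sum_congr rfl fun j _ => ?_
    simp [Real.norm_eq_abs, sq_abs]
  rw [e1, e1] at key
  exact key

lemma trace_mul_le_trace {n : ℕ} {M B : Matrix (Fin n) (Fin n) ℝ} (hM : M.PosSemidef)
    (hB : opNorm B ≤ 1) : Matrix.trace (M * Bᵀ) ≤ Matrix.trace M := by
  obtain ⟨S, hSH, hSS⟩ := psd_exists_sqrt hM
  have hSsym : ∀ i k, S k i = S i k := herm_symm hSH
  have step1 : Matrix.trace (M * Bᵀ) = Matrix.trace (S * B * S) := by
    rw [trace_mul_cycle S B S, ← hSS, ← trace_transpose (S * S * Bᵀ)]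
    rw [transpose_mul, transpose_mul, transpose_transpose]
    have hT : Sᵀ = S := by ext i j; exact hSsym i j
    rw [hT]
    rw [Matrix.mul_assoc, trace_mul_comm]
    rw [Matrix.mul_assoc]
  have step2 : Matrix.trace (S * B * S) = ∑ i, dotProduct (fun k => S i k)
      (B.mulVec (fun k => S i k)) := by
    rw [Matrix.trace]
    refine Finset.sum_congr rfl fun i _ => ?_
    simp only [Matrix.diag_apply, Matrix.mul_apply, dotProduct, Matrix.mulVec,
      dotProduct, Finset.sum_mul, Finset.mul_sum]
    rw [Finset.sum_comm]
    refine Finset.sum_congr rfl fun j _ => Finset.sum_congr rfl fun k _ => ?_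
    rw [hSsym i k]; ring
  have step3 : ∀ i, dotProduct (fun k => S i k) (B.mulVec (fun k => S i k))
      ≤ opNorm B * ∑ k, S i k ^ 2 := by
    intro i
    have h1 := dot_cs n (fun k => S i k) (B.mulVec (fun k => S i k))
    have h2 := mulVec_l2_le B (fun k => S i k)
    have hnn : (0:ℝ) ≤ Real.sqrt (∑ k, S i k ^ 2) := Real.sqrt_nonneg _
    calc dotProduct (fun k => S i k) (B.mulVec (fun k => S i k))
        ≤ Real.sqrt (∑ k, S i k ^ 2) * Real.sqrt (∑ k, (B.mulVec (fun k => S i k)) k ^ 2) := h1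
      _ ≤ Real.sqrt (∑ k, S i k ^ 2) * (opNorm B * Real.sqrt (∑ k, S i k ^ 2)) :=
          mul_le_mul_of_nonneg_left h2 hnn
      _ = opNorm B * (Real.sqrt (∑ k, S i k ^ 2) * Real.sqrt (∑ k, S i k ^ 2)) := by ring
      _ = opNorm B * ∑ k, S i k ^ 2 := by
          rw [Real.mul_self_sqrt (by positivity)]
  have step4 : (∑ i, ∑ k, S i k ^ 2) = Matrix.trace M := by
    rw [← hSS, Matrix.trace]
    refine Finset.sum_congr rfl fun i _ => ?_
    simp only [Matrix.diag_apply, Matrix.mul_apply]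
    refine Finset.sum_congr rfl fun k _ => ?_
    rw [hSsym i k]; ring
  have htr : 0 ≤ Matrix.trace M := psd_trace_nonneg hM
  calc Matrix.trace (M * Bᵀ) = Matrix.trace (S * B * S) := step1
    _ ≤ ∑ i, (opNorm B * ∑ k, S i k ^ 2) := by
        rw [step2]; exact Finset.sum_le_sum fun i _ => step3 i
    _ = opNorm B * ∑ i, ∑ k, S i k ^ 2 := by rw [Finset.mul_sum]
    _ = opNorm B * Matrix.trace M := by rw [step4]
    _ ≤ 1 * Matrix.trace M := mul_le_mul_of_nonneg_right hB htr
    _ = Matrix.trace M := one_mul _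

lemma nuclearNorm_le_trace {n : ℕ} {M : Matrix (Fin n) (Fin n) ℝ} (hM : M.PosSemidef) :
    nuclearNorm M ≤ Matrix.trace M := by
  apply Real.sSup_le
  · rintro r ⟨B, hB, rfl⟩
    exact trace_mul_le_trace hM hB
  · exact psd_trace_nonneg hM

/- ### tangent/normal decomposition facts -/

lemma tangent_add_normal {n : ℕ} (x₀ : Fin n → ℝ) (H : Matrix (Fin n) (Fin n) ℝ) :
    tangentPart x₀ H + normalPart x₀ H = H := by
  unfold tangentPart normalPart
  noncomm_ring

lemma P_idem {n : ℕ} {x₀ : Fin n → ℝ} (hx₀ : ∑ i, x₀ i ^ 2 = 1) :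
    vecMulVec x₀ x₀ * vecMulVec x₀ x₀ = vecMulVec x₀ x₀ := by
  ext i j
  simp only [Matrix.mul_apply, Matrix.vecMulVec_apply]
  calc (∑ k, x₀ i * x₀ k * (x₀ k * x₀ j)) = (x₀ i * x₀ j) * ∑ k, x₀ k ^ 2 := by
        rw [Finset.mul_sum]; exact Finset.sum_congr rfl fun k _ => by ring
    _ = x₀ i * x₀ j := by rw [hx₀, mul_one]

lemma ameas_sub {n m : ℕ} (a : Fin m → Fin n → ℝ) (X Y : Matrix (Fin n) (Fin n) ℝ) (i : Fin m) :
    Ameas a (X - Y) i = Ameas a X i - Ameas a Y i := by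
  simp [Ameas, Matrix.sub_mulVec, dotProduct_sub]

lemma ameas_add {n m : ℕ} (a : Fin m → Fin n → ℝ) (X Y : Matrix (Fin n) (Fin n) ℝ) (i : Fin m) :
    Ameas a (X + Y) i = Ameas a X i + Ameas a Y i := by
  simp [Ameas, Matrix.add_mulVec, dotProduct_add]

lemma trace_vecMulVec_mul_s13 {n : ℕ} (a : Fin n → ℝ) (M : Matrix (Fin n) (Fin n) ℝ) :
    Matrix.trace (vecMulVec a a * M) = dotProduct a (M.mulVec a) := by
  simp only [Matrix.trace, Matrix.diag_apply, Matrix.mul_apply, Matrix.vecMulVec_apply,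
    dotProduct, Matrix.mulVec, dotProduct]
  rw [Finset.sum_comm]
  exact Finset.sum_congr rfl fun k _ => by
    rw [Finset.mul_sum]
    exact Finset.sum_congr rfl fun i _ => by ring

lemma trace_Y_mul {n m : ℕ} (a : Fin m → Fin n → ℝ) (y : Fin m → ℝ)
    (M : Matrix (Fin n) (Fin n) ℝ) :
    Matrix.trace ((∑ i, y i • vecMulVec (a i) (a i)) * M) = ∑ i, y i * Ameas a M i := by
  rw [Finset.sum_mul, Matrix.trace_sum]
  exact Finset.sum_congr rfl fun i _ => by
    rw [Matrix.smul_mul, Matrix.trace_smul, trace_vecMulVec_mul_s13, Ameas]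
    simp

lemma psd_vecMulVec {n : ℕ} (x₀ : Fin n → ℝ) : (vecMulVec x₀ x₀).PosSemidef := by
  simpa using Matrix.posSemidef_vecMulVec_self_star x₀

lemma QP_zero {n : ℕ} {x₀ : Fin n → ℝ}
    (hP : vecMulVec x₀ x₀ * vecMulVec x₀ x₀ = vecMulVec x₀ x₀) :
    (1 - vecMulVec x₀ x₀) * vecMulVec x₀ x₀ = 0 := by
  rw [Matrix.sub_mul, Matrix.one_mul, hP, sub_self]

lemma PQ_zero {n : ℕ} {x₀ : Fin n → ℝ}
    (hP : vecMulVec x₀ x₀ * vecMulVec x₀ x₀ = vecMulVec x₀ x₀) :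
    vecMulVec x₀ x₀ * (1 - vecMulVec x₀ x₀) = 0 := by
  rw [Matrix.mul_sub, Matrix.mul_one, hP, sub_self]

lemma trace_tangent_mul_normal {n : ℕ} {x₀ : Fin n → ℝ}
    (hP : vecMulVec x₀ x₀ * vecMulVec x₀ x₀ = vecMulVec x₀ x₀)
    (Y H : Matrix (Fin n) (Fin n) ℝ) :
    Matrix.trace (tangentPart x₀ Y * normalPart x₀ H) = 0 := by
  have hqp : (1 - vecMulVec x₀ x₀) * vecMulVec x₀ x₀ = 0 := QP_zero hP
  have hpq : vecMulVec x₀ x₀ * (1 - vecMulVec x₀ x₀) = 0 := PQ_zero hP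
  have expand : tangentPart x₀ Y * normalPart x₀ H
      = (vecMulVec x₀ x₀ * Y) * normalPart x₀ H
        + ((1 - vecMulVec x₀ x₀) * Y) * ((vecMulVec x₀ x₀ * (1 - vecMulVec x₀ x₀))
            * (H * (1 - vecMulVec x₀ x₀))) := by
    unfold tangentPart normalPart
    noncomm_ring
  rw [expand, hpq, Matrix.zero_mul, Matrix.mul_zero, Matrix.trace_add, Matrix.trace_zero,
    add_zero, Matrix.trace_mul_comm]
  have e2 : normalPart x₀ H * (vecMulVec x₀ x₀ * Y)
      = (1 - vecMulVec x₀ x₀) * H * (((1 - vecMulVec x₀ x₀) * vecMulVec x₀ x₀) * Y) := by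
    unfold normalPart
    noncomm_ring
  rw [e2, hqp, Matrix.zero_mul, Matrix.mul_zero, Matrix.trace_zero]

lemma trace_normal_mul_tangent {n : ℕ} {x₀ : Fin n → ℝ}
    (hP : vecMulVec x₀ x₀ * vecMulVec x₀ x₀ = vecMulVec x₀ x₀)
    (Y H : Matrix (Fin n) (Fin n) ℝ) :
    Matrix.trace (normalPart x₀ Y * tangentPart x₀ H) = 0 := by
  rw [Matrix.trace_mul_comm]
  exact trace_tangent_mul_normal hP H Y

lemma Q_mul_normal {n : ℕ} {x₀ : Fin n → ℝ}
    (hP : vecMulVec x₀ x₀ * vecMulVec x₀ x₀ = vecMulVec x₀ x₀)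
    (H : Matrix (Fin n) (Fin n) ℝ) :
    (1 - vecMulVec x₀ x₀) * normalPart x₀ H = normalPart x₀ H := by
  unfold normalPart
  have e : (1 - vecMulVec x₀ x₀) * ((1 - vecMulVec x₀ x₀) * H * (1 - vecMulVec x₀ x₀))
      = ((1 - vecMulVec x₀ x₀) * (1 - vecMulVec x₀ x₀)) * H * (1 - vecMulVec x₀ x₀) := by
    noncomm_ring
  rw [e]
  have hQQ : ((1 : Matrix (Fin n) (Fin n) ℝ) - vecMulVec x₀ x₀) * (1 - vecMulVec x₀ x₀)
      = 1 - vecMulVec x₀ x₀ := by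
    rw [Matrix.mul_sub, Matrix.mul_one, Matrix.sub_mul, Matrix.one_mul, hP]
    noncomm_ring
  rw [hQQ]

lemma normalPart_sub_P {n : ℕ} {x₀ : Fin n → ℝ}
    (hP : vecMulVec x₀ x₀ * vecMulVec x₀ x₀ = vecMulVec x₀ x₀)
    (X : Matrix (Fin n) (Fin n) ℝ) :
    normalPart x₀ (X - vecMulVec x₀ x₀)
      = (1 - vecMulVec x₀ x₀) * X * (1 - vecMulVec x₀ x₀) := by
  unfold normalPart
  have e : (1 - vecMulVec x₀ x₀) * (X - vecMulVec x₀ x₀) * (1 - vecMulVec x₀ x₀)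
      = (1 - vecMulVec x₀ x₀) * X * (1 - vecMulVec x₀ x₀)
        - ((1 - vecMulVec x₀ x₀) * vecMulVec x₀ x₀) * (1 - vecMulVec x₀ x₀) := by
    noncomm_ring
  rw [e, QP_zero hP, Matrix.zero_mul, sub_zero]

lemma normalPart_sub_psd {n : ℕ} {x₀ : Fin n → ℝ}
    (hP : vecMulVec x₀ x₀ * vecMulVec x₀ x₀ = vecMulVec x₀ x₀)
    {X : Matrix (Fin n) (Fin n) ℝ} (hX : X.PosSemidef) :
    (normalPart x₀ (X - vecMulVec x₀ x₀)).PosSemidef := by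
  rw [normalPart_sub_P hP]
  have hQsym : ((1 : Matrix (Fin n) (Fin n) ℝ) - vecMulVec x₀ x₀)ᴴ = 1 - vecMulVec x₀ x₀ := by
    ext i j
    simp [Matrix.conjTranspose_apply, Matrix.sub_apply, Matrix.one_apply, Matrix.vecMulVec_apply,
      mul_comm, eq_comm]
  have h2 := hX.mul_mul_conjTranspose_same (1 - vecMulVec x₀ x₀)
  rwa [hQsym] at h2

lemma trace_mul_symm {n : ℕ} (A B : Matrix (Fin n) (Fin n) ℝ) (hB : ∀ i j, B j i = B i j) :
    Matrix.trace (A * B) = ∑ i, ∑ j, A i j * B i j := by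
  simp only [Matrix.trace, Matrix.diag_apply, Matrix.mul_apply]
  exact Finset.sum_congr rfl fun i _ => Finset.sum_congr rfl fun j _ => by rw [hB i j]

lemma tangent_rep {n : ℕ} (x₀ : Fin n → ℝ) (X : Matrix (Fin n) (Fin n) ℝ)
    (hX : ∀ i j, X j i = X i j) :
    tangentPart x₀ X = vecMulVec x₀ (X.mulVec x₀ - ((dotProduct x₀ (X.mulVec x₀)) / 2) • x₀)
      + vecMulVec (X.mulVec x₀ - ((dotProduct x₀ (X.mulVec x₀)) / 2) • x₀) x₀ := by
  have expand : tangentPart x₀ X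
      = vecMulVec x₀ x₀ * X + X * vecMulVec x₀ x₀ - vecMulVec x₀ x₀ * (X * vecMulVec x₀ x₀) := by
    unfold tangentPart; noncomm_ring
  rw [expand]
  ext i j
  set u := X.mulVec x₀ with hu
  have hPX : (vecMulVec x₀ x₀ * X) i j = x₀ i * u j := by
    simp only [Matrix.mul_apply, Matrix.vecMulVec_apply, hu, Matrix.mulVec, dotProduct]
    rw [Finset.mul_sum]
    exact Finset.sum_congr rfl fun k _ => by rw [hX j k]; ring
  have hXP : (X * vecMulVec x₀ x₀) i j = u i * x₀ j := by
    simp only [Matrix.mul_apply, Matrix.vecMulVec_apply, hu, Matrix.mulVec, dotProduct]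
    rw [Finset.sum_mul]
    exact Finset.sum_congr rfl fun k _ => by ring
  have hPXP : (vecMulVec x₀ x₀ * (X * vecMulVec x₀ x₀)) i j
      = (dotProduct x₀ u) * (x₀ i * x₀ j) := by
    simp only [Matrix.mul_apply, Matrix.vecMulVec_apply, dotProduct]
    have hk : ∀ k, (∑ l, X k l * (x₀ l * x₀ j)) = u k * x₀ j := by
      intro k
      rw [hu]
      simp only [Matrix.mulVec, dotProduct, Finset.sum_mul]
      exact Finset.sum_congr rfl fun l _ => by ring
    calc ∑ k, x₀ i * x₀ k * ∑ l, X k l * (x₀ l * x₀ j)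
        = ∑ k, (x₀ i * x₀ j) * (x₀ k * u k) := by
          refine Finset.sum_congr rfl fun k _ => ?_
          rw [hk k]; ring
      _ = (∑ k, x₀ k * u k) * (x₀ i * x₀ j) := by rw [← Finset.mul_sum]; ring
  simp only [Matrix.sub_apply, Matrix.add_apply, hPX, hXP, hPXP, Matrix.vecMulVec_apply,
    Pi.sub_apply, Pi.smul_apply, smul_eq_mul]
  ring

lemma abs_sub_le' (a b : ℝ) : |a - b| ≤ |a| + |b| := by
  rw [sub_eq_add_neg]
  exact (abs_add_le _ _).trans (by rw [abs_neg])

lemma alg_final (W E lam0 M Δ κ : ℝ) (hE : E ≠ 0) (hl : lam0 ≠ 0) (hM : M ≠ 0) :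
    ((2 * lam0 + 2 * (κ * M)) * W / (M * E)) * (1 + Δ / lam0) + 2 * κ * W / lam0
      = ((2 * (κ * M) + 2 * lam0) * (1 + Δ / lam0) / E + 2 * (κ * M) / lam0) * W / M := by
  field_simp
  ring

/-- Core lemma: under the one-sided RIP, the `s`-robust outlier bound condition, and the
existence of an inexact dual certificate `Y = A*(y)` with `Y_{T⊥} ⪰ lam0 I_{T⊥}`,
`‖Y_T‖_F ≤ Δ` and coefficients `yᵢ = −κ sgn(zᵢ)` on `supp(z)`, `|yᵢ| ≤ κ` off it
(`κ = (9 − β₀)/m`), if `Ω = lam0 C(s)/(1+δ) − Δ > 0` then any minimizer `X̂` of the robust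
PhaseLift program satisfies `‖X̂ − x₀x₀ᵀ‖_F ≤ C₀ ‖ω‖₁/m` with
`C₀ = (18 − 2β₀ + 2lam0)(1 + Δ/lam0)/Ω + (18 − 2β₀)/lam0`. -/
theorem stmt_13 {n m : ℕ} (hm : 0 < m) (a : Fin m → Fin n → ℝ)
    (x₀ : Fin n → ℝ) (hx₀ : ∑ i, x₀ i ^ 2 = 1)
    (s δ Cs : ℝ) (hs0 : 0 < s) (hs1 : s < 1) (hδ0 : 0 < δ) (hδ1 : δ < 1) (hCs : 0 < Cs)
    (hRIP : ∀ X : Matrix (Fin n) (Fin n) ℝ, X.PosSemidef →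
      (1 / m : ℝ) * ∑ i, |Ameas a X i| ≤ (1 + δ) * nuclearNorm X)
    (hROBC : ∀ y : Fin n → ℝ, ∀ S : Finset (Fin m), (S.card : ℝ) ≤ s * m →
      Cs * frob (vecMulVec x₀ y + vecMulVec y x₀) ≤
        (1 / m : ℝ) * ((∑ i ∈ Sᶜ, |Ameas a (vecMulVec x₀ y + vecMulVec y x₀) i|) -
          ∑ i ∈ S, |Ameas a (vecMulVec x₀ y + vecMulVec y x₀) i|))
    (ω z : Fin m → ℝ) (S : Finset (Fin m)) (hS : (S.card : ℝ) ≤ s * m)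
    (hz : ∀ i, z i ≠ 0 → i ∈ S)
    (b : Fin m → ℝ) (hb : b = fun i => Ameas a (vecMulVec x₀ x₀) i + ω i + z i)
    (lam0 Δ κ : ℝ) (hlam0 : 0 < lam0) (hΔ : 0 < Δ) (hκ : κ = (9 - beta0) / m)
    (y : Fin m → ℝ) (Y : Matrix (Fin n) (Fin n) ℝ)
    (hY : Y = ∑ i, y i • vecMulVec (a i) (a i))
    (hYperp : (normalPart x₀ Y - lam0 • (1 - vecMulVec x₀ x₀)).PosSemidef)
    (hYT : frob (tangentPart x₀ Y) ≤ Δ)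
    (hy1 : ∀ i, z i ≠ 0 → y i = -κ * Real.sign (z i))
    (hy2 : ∀ i, z i = 0 → |y i| ≤ κ)
    (hΩ : 0 < lam0 * Cs / (1 + δ) - Δ)
    (Xhat : Matrix (Fin n) (Fin n) ℝ) (hXhatPSD : Xhat.PosSemidef)
    (hmin : ∀ X' : Matrix (Fin n) (Fin n) ℝ, X'.PosSemidef →
      ∑ i, |Ameas a Xhat i - b i| ≤ ∑ i, |Ameas a X' i - b i|) :
    frob (Xhat - vecMulVec x₀ x₀) ≤
      ((18 - 2 * beta0 + 2 * lam0) * (1 + Δ / lam0) / (lam0 * Cs / (1 + δ) - Δ) +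
          (18 - 2 * beta0) / lam0) * (∑ i, |ω i|) / m := by
  have hP : vecMulVec x₀ x₀ * vecMulVec x₀ x₀ = vecMulVec x₀ x₀ := P_idem hx₀
  have hM0 : (0:ℝ) < (m:ℝ) := by exact_mod_cast hm
  have h1δ : (0:ℝ) < 1 + δ := by linarith
  set W := ∑ i, |ω i| with hWdef
  have hW0 : 0 ≤ W := Finset.sum_nonneg fun i _ => abs_nonneg _
  set H := Xhat - vecMulVec x₀ x₀ with hHdef
  have Hsym : ∀ i j, H j i = H i j := by
    intro i j
    have h1 := herm_symm hXhatPSD.1 i j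
    simp only [hHdef, Matrix.sub_apply, Matrix.vecMulVec_apply, h1]
    ring
  have hTN : tangentPart x₀ H + normalPart x₀ H = H := tangent_add_normal x₀ H
  have hNpsd : (normalPart x₀ H).PosSemidef := normalPart_sub_psd hP hXhatPSD
  set f := frob (tangentPart x₀ H) with hfdef
  set τ := Matrix.trace (normalPart x₀ H) with hτdef
  have hf0 : 0 ≤ f := frob_nonneg _
  have hτ0 : 0 ≤ τ := psd_trace_nonneg hNpsd
  have hbi : ∀ i, b i = Ameas a (vecMulVec x₀ x₀) i + ω i + z i := fun i => by rw [hb]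
  have hAH : ∀ i, Ameas a H i = Ameas a Xhat i - Ameas a (vecMulVec x₀ x₀) i :=
    fun i => ameas_sub a _ _ i
  have hATN : ∀ i, Ameas a H i = Ameas a (tangentPart x₀ H) i + Ameas a (normalPart x₀ H) i := by
    intro i
    conv_lhs => rw [← hTN]
    exact ameas_add a _ _ i
  have hD : ∀ i, Ameas a Xhat i - b i = Ameas a H i - ω i - z i := by
    intro i; rw [hAH i, hbi i]; ring
  have hDP : ∀ i, Ameas a (vecMulVec x₀ x₀) i - b i = -(ω i + z i) := by
    intro i; rw [hbi i]; ring
  set Z := ∑ i, |z i| with hZdef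
  have K1 : ∑ i, |Ameas a H i - ω i - z i| ≤ W + Z := by
    calc ∑ i, |Ameas a H i - ω i - z i| = ∑ i, |Ameas a Xhat i - b i| :=
          Finset.sum_congr rfl fun i _ => by rw [hD i]
      _ ≤ ∑ i, |Ameas a (vecMulVec x₀ x₀) i - b i| := hmin _ (psd_vecMulVec x₀)
      _ = ∑ i, |ω i + z i| := Finset.sum_congr rfl fun i _ => by rw [hDP i, abs_neg]
      _ ≤ ∑ i, (|ω i| + |z i|) := Finset.sum_le_sum fun i _ => abs_add_le _ _
      _ = W + Z := Finset.sum_add_distrib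
  have hzS : ∀ i, i ∉ S → z i = 0 := fun i hi => by
    by_contra h; exact hi (hz i h)
  have hZS : ∑ i ∈ S, |z i| = Z := by
    rw [hZdef]
    apply Finset.sum_subset (Finset.subset_univ S)
    intro i _ hi; rw [hzS i hi, abs_zero]
  have hκ0 : 0 ≤ κ := by
    by_cases hex : ∃ i, z i = 0
    · obtain ⟨i, hi⟩ := hex
      exact le_trans (abs_nonneg _) (hy2 i hi)
    · push_neg at hex
      exfalso
      have hSu : S = Finset.univ := Finset.eq_univ_of_forall (fun i => hz i (hex i))
      rw [hSu, Finset.card_univ, Fintype.card_fin] at hS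
      nlinarith
  have hyb : ∀ i, |y i| ≤ κ := by
    intro i
    by_cases hzi : z i = 0
    · exact hy2 i hzi
    · rw [hy1 i hzi, abs_mul, abs_neg, abs_of_nonneg hκ0]
      have : |Real.sign (z i)| = 1 := by
        rcases lt_or_gt_of_ne hzi with h | h
        · rw [Real.sign_of_neg h]; norm_num
        · rw [Real.sign_of_pos h]; norm_num
      rw [this, mul_one]
  have K2 : ∑ i, y i * Ameas a H i ≤ 2 * κ * W := by
    have per : ∀ i, y i * (Ameas a H i - ω i)
        ≤ κ * |Ameas a H i - ω i - z i| - κ * |z i| := by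
      intro i
      by_cases hzi : z i = 0
      · rw [hzi, sub_zero, abs_zero, mul_zero, sub_zero]
        calc y i * (Ameas a H i - ω i) ≤ |y i * (Ameas a H i - ω i)| := le_abs_self _
          _ = |y i| * |Ameas a H i - ω i| := abs_mul _ _
          _ ≤ κ * |Ameas a H i - ω i| :=
              mul_le_mul_of_nonneg_right (hy2 i hzi) (abs_nonneg _)
      · have hsgn := hy1 i hzi
        have h1 : Real.sign (z i) * z i = |z i| := by
          rcases lt_or_gt_of_ne hzi with h | h
          · rw [Real.sign_of_neg h, abs_of_neg h]; ring
          · rw [Real.sign_of_pos h, abs_of_pos h]; ring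
        have h2 : |Real.sign (z i)| = 1 := by
          rcases lt_or_gt_of_ne hzi with h | h
          · rw [Real.sign_of_neg h]; norm_num
          · rw [Real.sign_of_pos h]; norm_num
        have key : y i * (Ameas a H i - ω i)
            = (-κ * Real.sign (z i)) * (Ameas a H i - ω i - z i) - κ * |z i| := by
          rw [hsgn, ← h1]; ring
        rw [key]
        have hb1 : (-κ * Real.sign (z i)) * (Ameas a H i - ω i - z i)
            ≤ κ * |Ameas a H i - ω i - z i| := by
          calc (-κ * Real.sign (z i)) * (Ameas a H i - ω i - z i)
              ≤ |(-κ * Real.sign (z i)) * (Ameas a H i - ω i - z i)| := le_abs_self _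
            _ = κ * |Ameas a H i - ω i - z i| := by
                rw [abs_mul, abs_mul, abs_neg, abs_of_nonneg hκ0, h2, mul_one]
        linarith
    have sum1 : ∑ i, y i * (Ameas a H i - ω i) ≤ κ * W := by
      calc ∑ i, y i * (Ameas a H i - ω i)
          ≤ ∑ i, (κ * |Ameas a H i - ω i - z i| - κ * |z i|) := Finset.sum_le_sum fun i _ => per i
        _ = κ * (∑ i, |Ameas a H i - ω i - z i|) - κ * Z := by
            rw [Finset.sum_sub_distrib, ← Finset.mul_sum, ← Finset.mul_sum]
        _ ≤ κ * (W + Z) - κ * Z := by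
            have := mul_le_mul_of_nonneg_left K1 hκ0
            linarith
        _ = κ * W := by ring
    have sum2 : ∑ i, y i * ω i ≤ κ * W := by
      calc ∑ i, y i * ω i ≤ ∑ i, κ * |ω i| := Finset.sum_le_sum fun i _ => by
            calc y i * ω i ≤ |y i * ω i| := le_abs_self _
              _ = |y i| * |ω i| := abs_mul _ _
              _ ≤ κ * |ω i| := mul_le_mul_of_nonneg_right (hyb i) (abs_nonneg _)
        _ = κ * W := by rw [← Finset.mul_sum]
    calc ∑ i, y i * Ameas a H i
        = (∑ i, y i * (Ameas a H i - ω i)) + ∑ i, y i * ω i := by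
          rw [← Finset.sum_add_distrib]
          exact Finset.sum_congr rfl fun i _ => by ring
      _ ≤ κ * W + κ * W := add_le_add sum1 sum2
      _ = 2 * κ * W := by ring
  have K3 : (∑ i ∈ Sᶜ, |Ameas a H i|) - ∑ i ∈ S, |Ameas a H i| ≤ 2 * W := by
    have hA : ∑ i ∈ Sᶜ, |Ameas a H i|
        ≤ ∑ i ∈ Sᶜ, (|Ameas a H i - ω i - z i| + |ω i|) := by
      refine Finset.sum_le_sum fun i hi => ?_
      have hz0 : z i = 0 := hzS i (Finset.mem_compl.mp hi)
      calc |Ameas a H i| = |(Ameas a H i - ω i - z i) + (ω i + z i)| := by ring_nf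
        _ ≤ |Ameas a H i - ω i - z i| + |ω i + z i| := abs_add_le _ _
        _ = |Ameas a H i - ω i - z i| + |ω i| := by rw [hz0, add_zero]
    have hB : ∑ i ∈ S, (|z i| - |ω i| - |Ameas a H i - ω i - z i|)
        ≤ ∑ i ∈ S, |Ameas a H i| := by
      refine Finset.sum_le_sum fun i _ => ?_
      have : |z i| ≤ |Ameas a H i| + |ω i| + |Ameas a H i - ω i - z i| := by
        calc |z i| = |(Ameas a H i - ω i) - (Ameas a H i - ω i - z i)| := by ring_nf
          _ ≤ |Ameas a H i - ω i| + |Ameas a H i - ω i - z i| := abs_sub_le' _ _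
          _ ≤ (|Ameas a H i| + |ω i|) + |Ameas a H i - ω i - z i| := by
              have := abs_sub_le' (Ameas a H i) (ω i)
              linarith
      linarith
    have hsplit1 : (∑ i ∈ S, (|Ameas a H i - ω i - z i| + |ω i|))
        + ∑ i ∈ Sᶜ, (|Ameas a H i - ω i - z i| + |ω i|)
        = (∑ i, |Ameas a H i - ω i - z i|) + W := by
      rw [Finset.sum_add_sum_compl, Finset.sum_add_distrib]
    have hsplit2 : ∑ i ∈ S, (|z i| - |ω i| - |Ameas a H i - ω i - z i|)
        = Z - ∑ i ∈ S, (|Ameas a H i - ω i - z i| + |ω i|) := by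
      rw [← hZS, ← Finset.sum_sub_distrib]
      exact Finset.sum_congr rfl fun i _ => by ring
    linarith
  -- cone constraint
  have Tsym : ∀ i j, tangentPart x₀ H j i = tangentPart x₀ H i j := by
    intro i j
    rw [tangent_rep x₀ H Hsym]
    simp only [Matrix.add_apply, Matrix.vecMulVec_apply]
    ring
  have hRapp := hROBC (H.mulVec x₀ - ((dotProduct x₀ (H.mulVec x₀)) / 2) • x₀) S hS
  rw [← tangent_rep x₀ H Hsym] at hRapp
  have hANb : ∑ i, |Ameas a (normalPart x₀ H) i| ≤ (m:ℝ) * (1 + δ) * τ := by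
    have h1 := hRIP (normalPart x₀ H) hNpsd
    have h2 : nuclearNorm (normalPart x₀ H) ≤ τ := nuclearNorm_le_trace hNpsd
    have h3 : (1 / m : ℝ) * ∑ i, |Ameas a (normalPart x₀ H) i| ≤ (1 + δ) * τ := by
      calc (1 / m : ℝ) * ∑ i, |Ameas a (normalPart x₀ H) i|
          ≤ (1 + δ) * nuclearNorm (normalPart x₀ H) := h1
        _ ≤ (1 + δ) * τ := mul_le_mul_of_nonneg_left h2 (by linarith)
    have h4 := mul_le_mul_of_nonneg_left h3 hM0.le
    calc ∑ i, |Ameas a (normalPart x₀ H) i|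
        = (m:ℝ) * ((1 / m : ℝ) * ∑ i, |Ameas a (normalPart x₀ H) i|) := by
          field_simp
      _ ≤ (m:ℝ) * ((1 + δ) * τ) := h4
      _ = (m:ℝ) * (1 + δ) * τ := by ring
  have K4 : Cs * f * (m:ℝ) ≤ 2 * W + (m:ℝ) * (1 + δ) * τ := by
    have hTb : ∀ i, |Ameas a (tangentPart x₀ H) i|
        ≤ |Ameas a H i| + |Ameas a (normalPart x₀ H) i| := by
      intro i
      have e : Ameas a (tangentPart x₀ H) i = Ameas a H i - Ameas a (normalPart x₀ H) i := by
        rw [hATN i]; ring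
      rw [e]; exact abs_sub_le' _ _
    have hTb2 : ∀ i, |Ameas a H i| - |Ameas a (normalPart x₀ H) i|
        ≤ |Ameas a (tangentPart x₀ H) i| := by
      intro i
      have e : Ameas a H i = Ameas a (tangentPart x₀ H) i + Ameas a (normalPart x₀ H) i := hATN i
      have := abs_add_le (Ameas a (tangentPart x₀ H) i) (Ameas a (normalPart x₀ H) i)
      rw [← e] at this
      linarith
    have hup : (∑ i ∈ Sᶜ, |Ameas a (tangentPart x₀ H) i|)
        - ∑ i ∈ S, |Ameas a (tangentPart x₀ H) i|
        ≤ 2 * W + ∑ i, |Ameas a (normalPart x₀ H) i| := by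
      have u1 : ∑ i ∈ Sᶜ, |Ameas a (tangentPart x₀ H) i|
          ≤ (∑ i ∈ Sᶜ, |Ameas a H i|) + ∑ i ∈ Sᶜ, |Ameas a (normalPart x₀ H) i| := by
        rw [← Finset.sum_add_distrib]
        exact Finset.sum_le_sum fun i _ => hTb i
      have u2 : (∑ i ∈ S, |Ameas a H i|) - ∑ i ∈ S, |Ameas a (normalPart x₀ H) i|
          ≤ ∑ i ∈ S, |Ameas a (tangentPart x₀ H) i| := by
        rw [← Finset.sum_sub_distrib]
        exact Finset.sum_le_sum fun i _ => hTb2 i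
      have u3 : (∑ i ∈ S, |Ameas a (normalPart x₀ H) i|)
          + ∑ i ∈ Sᶜ, |Ameas a (normalPart x₀ H) i| = ∑ i, |Ameas a (normalPart x₀ H) i| :=
        Finset.sum_add_sum_compl S _
      linarith [K3]
    have hRapp2 : Cs * f ≤ (1 / m : ℝ) * (2 * W + ∑ i, |Ameas a (normalPart x₀ H) i|) := by
      calc Cs * f ≤ (1 / m : ℝ) * ((∑ i ∈ Sᶜ, |Ameas a (tangentPart x₀ H) i|)
            - ∑ i ∈ S, |Ameas a (tangentPart x₀ H) i|) := hRapp
        _ ≤ (1 / m : ℝ) * (2 * W + ∑ i, |Ameas a (normalPart x₀ H) i|) := by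
            apply mul_le_mul_of_nonneg_left hup
            positivity
    have := mul_le_mul_of_nonneg_right hRapp2 hM0.le
    calc Cs * f * (m:ℝ) ≤ (1 / m : ℝ) * (2 * W + ∑ i, |Ameas a (normalPart x₀ H) i|) * m := this
      _ = 2 * W + ∑ i, |Ameas a (normalPart x₀ H) i| := by field_simp
      _ ≤ 2 * W + (m:ℝ) * (1 + δ) * τ := by linarith [hANb]
  -- dual certificate bound
  have K5 : lam0 * τ ≤ Δ * f + 2 * κ * W := by
    have hYH : Matrix.trace (Y * H) ≤ 2 * κ * W := by
      rw [hY, trace_Y_mul]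
      exact K2
    have hdec : Matrix.trace (Y * H)
        = Matrix.trace (tangentPart x₀ Y * tangentPart x₀ H)
          + Matrix.trace (normalPart x₀ Y * normalPart x₀ H) := by
      conv_lhs => rw [← tangent_add_normal x₀ Y, ← hTN]
      rw [Matrix.add_mul, Matrix.mul_add, Matrix.mul_add, Matrix.trace_add, Matrix.trace_add,
        Matrix.trace_add, trace_tangent_mul_normal hP, trace_normal_mul_tangent hP]
      ring
    have hTbound : -(Δ * f) ≤ Matrix.trace (tangentPart x₀ Y * tangentPart x₀ H) := by
      rw [trace_mul_symm _ _ Tsym]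
      have hcs := frob_cs (tangentPart x₀ Y) (tangentPart x₀ H)
      have h1 : frob (tangentPart x₀ Y) * f ≤ Δ * f :=
        mul_le_mul_of_nonneg_right hYT hf0
      have h2 := neg_abs_le (∑ i, ∑ j, tangentPart x₀ Y i j * tangentPart x₀ H i j)
      linarith
    have hNbound : lam0 * τ ≤ Matrix.trace (normalPart x₀ Y * normalPart x₀ H) := by
      have h0 := psd_trace_mul_nonneg hYperp hNpsd
      have e : (normalPart x₀ Y - lam0 • (1 - vecMulVec x₀ x₀)) * normalPart x₀ H
          = normalPart x₀ Y * normalPart x₀ H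
            - lam0 • ((1 - vecMulVec x₀ x₀) * normalPart x₀ H) := by
        rw [Matrix.sub_mul, Matrix.smul_mul]
      rw [e, Q_mul_normal hP, Matrix.trace_sub, Matrix.trace_smul] at h0
      simp only [smul_eq_mul] at h0
      linarith
    linarith
  -- final numeric combination
  have final0 : frob H ≤ f + τ := by
    calc frob H = frob (tangentPart x₀ H + normalPart x₀ H) := by rw [hTN]
      _ ≤ f + frob (normalPart x₀ H) := frob_add_le _ _
      _ ≤ f + τ := by linarith [psd_frob_le_trace hNpsd]
  have hE : 0 < lam0 * Cs / (1 + δ) - Δ := hΩ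
  have hG' : (lam0 * Cs - Δ * (1 + δ)) * f * (m:ℝ)
      ≤ (1 + δ) * ((2 * lam0 + 2 * (κ * (m:ℝ))) * W) := by
    have i1 : lam0 * (Cs * f * (m:ℝ)) ≤ lam0 * (2 * W + (m:ℝ) * (1 + δ) * τ) :=
      mul_le_mul_of_nonneg_left K4 hlam0.le
    have i2 : ((m:ℝ) * (1 + δ)) * (lam0 * τ) ≤ ((m:ℝ) * (1 + δ)) * (Δ * f + 2 * κ * W) :=
      mul_le_mul_of_nonneg_left K5 (by positivity)
    nlinarith [mul_nonneg (mul_nonneg hlam0.le hW0) hδ0.le]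
  have hG : (lam0 * Cs / (1 + δ) - Δ) * f * (m:ℝ) ≤ (2 * lam0 + 2 * (κ * (m:ℝ))) * W := by
    have hcancel : (lam0 * Cs / (1 + δ)) * (1 + δ) = lam0 * Cs :=
      div_mul_cancel₀ _ (ne_of_gt h1δ)
    have hmul : ((lam0 * Cs / (1 + δ) - Δ) * f * (m:ℝ)) * (1 + δ)
        = (lam0 * Cs - Δ * (1 + δ)) * f * (m:ℝ) := by
      linear_combination (f * (m:ℝ)) * hcancel
    have : ((lam0 * Cs / (1 + δ) - Δ) * f * (m:ℝ)) * (1 + δ)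
        ≤ ((2 * lam0 + 2 * (κ * (m:ℝ))) * W) * (1 + δ) := by
      rw [hmul]
      linarith [hG']
    exact le_of_mul_le_mul_right this h1δ
  have hfb : f ≤ (2 * lam0 + 2 * (κ * (m:ℝ))) * W / ((m:ℝ) * (lam0 * Cs / (1 + δ) - Δ)) := by
    rw [le_div_iff₀ (by positivity)]
    calc f * ((m:ℝ) * (lam0 * Cs / (1 + δ) - Δ))
        = (lam0 * Cs / (1 + δ) - Δ) * f * (m:ℝ) := by ring
      _ ≤ (2 * lam0 + 2 * (κ * (m:ℝ))) * W := hG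
  have hτb : τ ≤ (Δ * f + 2 * κ * W) / lam0 := by
    rw [le_div_iff₀ hlam0]
    calc τ * lam0 = lam0 * τ := by ring
      _ ≤ Δ * f + 2 * κ * W := K5
  have hβ : (18:ℝ) - 2 * beta0 = 2 * (κ * (m:ℝ)) := by
    rw [hκ]
    field_simp
    ring
  rw [hβ]
  have hsum : frob H ≤ f + (Δ * f + 2 * κ * W) / lam0 := by linarith
  have hone : (0:ℝ) ≤ 1 + Δ / lam0 := by positivity
  have step1 : f + (Δ * f + 2 * κ * W) / lam0 = f * (1 + Δ / lam0) + 2 * κ * W / lam0 := by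
    field_simp
    ring
  have step2 : f * (1 + Δ / lam0)
      ≤ ((2 * lam0 + 2 * (κ * (m:ℝ))) * W / ((m:ℝ) * (lam0 * Cs / (1 + δ) - Δ))) * (1 + Δ / lam0) :=
    mul_le_mul_of_nonneg_right hfb hone
  have step3 : ((2 * lam0 + 2 * (κ * (m:ℝ))) * W / ((m:ℝ) * (lam0 * Cs / (1 + δ) - Δ)))
        * (1 + Δ / lam0) + 2 * κ * W / lam0
      = ((2 * (κ * (m:ℝ)) + 2 * lam0) * (1 + Δ / lam0) / (lam0 * Cs / (1 + δ) - Δ)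
          + 2 * (κ * (m:ℝ)) / lam0) * W / (m:ℝ) :=
    alg_final W _ lam0 _ Δ κ (ne_of_gt hE) (ne_of_gt hlam0) (ne_of_gt hM0)
  calc frob H ≤ f + (Δ * f + 2 * κ * W) / lam0 := hsum
    _ = f * (1 + Δ / lam0) + 2 * κ * W / lam0 := step1
    _ ≤ ((2 * lam0 + 2 * (κ * (m:ℝ))) * W / ((m:ℝ) * (lam0 * Cs / (1 + δ) - Δ)))
          * (1 + Δ / lam0) + 2 * κ * W / lam0 := by linarith [step2]
    _ = ((2 * (κ * (m:ℝ)) + 2 * lam0) * (1 + Δ / lam0) / (lam0 * Cs / (1 + δ) - Δ)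
          + 2 * (κ * (m:ℝ)) / lam0) * W / (m:ℝ) := step3
end
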